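/- arXiv:2103.13252 — 5 statements merged into one kernel-verified Lean document; each statement's English description precedes it below -/
import Mathlib

section
/- Let 0 < α < 1, β > 0, c > 0, b > 0, t > 0 and set a = e^{-bt}. For every real u, the Lévy–Khintchine integral of the innovation density satisfies ∫_0^∞ (e^{iux} − 1) ν_Z(x) dx = −(c β^α Γ(1−α)/(α b)) [ ∫_β^{β/a} z^{−1−α} (z − iu)^α dz + log a ], where both integrals on the left and right converge (the z-integral is a complex-valued integral over the real interval [β, β/a] with (z − iu)^α the principal complex power). -/
open MeasureTheory Set Complex Filter Topology

lemma aux_int_real {t ρ : ℝ} (ht : -1 < t) (hρ : 0 < ρ) :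
    IntegrableOn (fun x : ℝ => x ^ t * Real.exp (-(ρ * x))) (Ioi 0) := by
  have h := integrableOn_rpow_mul_exp_neg_mul_rpow ht zero_lt_one hρ
  refine h.congr_fun (fun x hx => ?_) measurableSet_Ioi
  simp only [Real.rpow_one, neg_mul]

lemma aux_meas_complex (t : ℝ) (w : ℂ) :
    AEStronglyMeasurable (fun x : ℝ => ((x ^ t : ℝ) : ℂ) * Complex.exp (-(w * x)))
      (volume.restrict (Ioi 0)) := by
  apply Measurable.aestronglyMeasurable
  fun_prop

lemma aux_norm_eq {t : ℝ} {w : ℂ} {x : ℝ} (hx : 0 < x) :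
    ‖((x ^ t : ℝ) : ℂ) * Complex.exp (-(w * x))‖ = x ^ t * Real.exp (-(w.re * x)) := by
  rw [norm_mul, Complex.norm_real, Real.norm_eq_abs,
    _root_.abs_of_nonneg (Real.rpow_nonneg hx.le t), Complex.norm_exp]
  congr 2
  simp [Complex.mul_re]

lemma aux_int_complex {t : ℝ} (ht : -1 < t) {w : ℂ} (hw : 0 < w.re) :
    IntegrableOn (fun x : ℝ => ((x ^ t : ℝ) : ℂ) * Complex.exp (-(w * x))) (Ioi 0) := by
  apply Integrable.mono' (aux_int_real ht hw) (aux_meas_complex t w)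
  filter_upwards [ae_restrict_mem measurableSet_Ioi] with x hx
  rw [aux_norm_eq hx]

lemma aux_exp_bound (θ : ℝ) : ‖Complex.exp (Complex.I * θ) - 1‖ ≤ |θ| := by
  have key : Complex.exp (Complex.I * θ) - 1
      = ∫ s in (0:ℝ)..θ, Complex.exp (Complex.I * s) * (Complex.I * 1) := by
    rw [intervalIntegral.integral_eq_sub_of_hasDerivAt
      (f := fun s : ℝ => Complex.exp (Complex.I * s))
      (fun s _ => by simpa using (((hasDerivAt_id s).ofReal_comp).const_mul Complex.I).cexp)]
    · simp
    · apply Continuous.intervalIntegrable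
      exact (Complex.continuous_exp.comp (continuous_const.mul Complex.continuous_ofReal)).mul
        continuous_const
  rw [key]
  have := intervalIntegral.norm_integral_le_of_norm_le_const
    (C := 1) (f := fun s : ℝ => Complex.exp (Complex.I * s) * (Complex.I * 1))
    (a := 0) (b := θ) ?_
  · simpa using this
  · intro s _
    rw [norm_mul, Complex.norm_exp]
    simp [Complex.mul_re]

lemma aux_ibp {σ : ℝ} (hσ0 : 0 < σ) (hσ1 : σ < 1) {w : ℂ} (hw : 0 < w.re) :
    ∫ x in Ioi (0:ℝ), ((x ^ σ : ℝ) : ℂ) * Complex.exp (-(w * x))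
      = (σ / w) * ∫ x in Ioi (0:ℝ), ((x ^ (σ - 1) : ℝ) : ℂ) * Complex.exp (-(w * x)) := by
  have hw0 : w ≠ 0 := fun h => by simp [h] at hw
  set G1 : ℝ → ℂ := fun x => ((x ^ (σ - 1) : ℝ) : ℂ) * Complex.exp (-(w * x)) with hG1
  set G2 : ℝ → ℂ := fun x => ((x ^ σ : ℝ) : ℂ) * Complex.exp (-(w * x)) with hG2
  have hint1 : IntegrableOn G1 (Ioi 0) := aux_int_complex (by linarith) hw
  have hint2 : IntegrableOn G2 (Ioi 0) := aux_int_complex (by linarith) hw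
  have key : ∫ x in Ioi (0:ℝ), ((σ : ℂ) * G1 x - w * G2 x) = 0 := by
    have := MeasureTheory.integral_Ioi_of_hasDerivAt_of_tendsto (a := 0)
      (f := fun x : ℝ => ((x ^ σ : ℝ) : ℂ) * Complex.exp (-(w * x)))
      (f' := fun x : ℝ => (σ : ℂ) * G1 x - w * G2 x) (m := 0) ?_ ?_ ?_ ?_
    · rw [this]; simp [Real.zero_rpow hσ0.ne']
    · apply ContinuousAt.continuousWithinAt
      have h1 : ContinuousAt (fun x : ℝ => ((x ^ σ : ℝ) : ℂ)) 0 :=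
        Complex.continuous_ofReal.continuousAt.comp
          (Real.continuousAt_rpow_const 0 σ (Or.inr hσ0.le))
      exact h1.mul ((Complex.continuous_exp.comp
        ((continuous_const.mul Complex.continuous_ofReal).neg)).continuousAt)
    · intro x hx
      have hx' : (0:ℝ) < x := hx
      have h1 : HasDerivAt (fun x : ℝ => ((x ^ σ : ℝ) : ℂ)) ((σ * x ^ (σ - 1) : ℝ) : ℂ) x :=
        (Real.hasDerivAt_rpow_const (Or.inl hx'.ne')).ofReal_comp
      have h2 : HasDerivAt (fun x : ℝ => Complex.exp (-(w * x)))
          (Complex.exp (-(w * x)) * (-(w * 1))) x :=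
        ((((hasDerivAt_id x).ofReal_comp).const_mul w).neg).cexp
      have := h1.mul h2
      refine this.congr_deriv ?_
      symm
      simp only [hG1, hG2]
      push_cast
      ring
    · apply Integrable.sub
      · exact hint1.const_mul _
      · exact hint2.const_mul _
    · have hb : Tendsto (fun x : ℝ => x ^ σ * Real.exp (-(w.re * x))) atTop (𝓝 (0:ℝ)) := by
        simpa [neg_mul] using tendsto_rpow_mul_exp_neg_mul_atTop_nhds_zero σ w.re hw
      apply squeeze_zero_norm' _ hb
      filter_upwards [eventually_gt_atTop 0] with x hx
      exact le_of_eq (aux_norm_eq hx)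
  have hs := MeasureTheory.integral_sub (hint1.const_mul (σ:ℂ)) (hint2.const_mul w)
  rw [hs] at key
  rw [MeasureTheory.integral_const_mul, MeasureTheory.integral_const_mul] at key
  have : w * ∫ x in Ioi (0:ℝ), G2 x = (σ:ℂ) * ∫ x in Ioi (0:ℝ), G1 x := by
    linear_combination -key
  field_simp
  linear_combination this

lemma aux_gamma {σ p : ℝ} (hσ0 : 0 < σ) (hσ1 : σ < 1) (hp : 0 < p) (v : ℝ) :
    ∫ x in Ioi (0:ℝ), ((x ^ (σ - 1) : ℝ) : ℂ) * Complex.exp (-(((p:ℂ) - Complex.I * v) * x))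
      = (Real.Gamma σ : ℂ) * ((p:ℂ) - Complex.I * v) ^ (-(σ:ℂ)) := by
  set w : ℝ → ℂ := fun v => (p:ℂ) - Complex.I * v with hw
  have hwre : ∀ v : ℝ, (w v).re = p := fun v => by simp [hw]
  have hw0 : ∀ v : ℝ, w v ≠ 0 := by
    intro v h
    have := hwre v
    rw [h] at this
    simp at this
    linarith
  set G : ℝ → ℂ :=
    fun v => ∫ x in Ioi (0:ℝ), ((x ^ (σ - 1) : ℝ) : ℂ) * Complex.exp (-(w v * x)) with hG
  have hrpow : ∀ {x : ℝ}, 0 < x → x ^ (σ - 1) * x = x ^ σ := by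
    intro x hx
    rw [show σ - 1 = σ + (-1) by ring, Real.rpow_add hx, Real.rpow_neg_one]
    field_simp
  -- derivative of G
  have hGd : ∀ v : ℝ, HasDerivAt G (Complex.I * ((σ / w v) * G v)) v := by
    intro v₀
    have hv1 : ∀ v : ℝ, HasDerivAt (fun v : ℝ => ((v:ℂ))) 1 v := by
      intro v
      simpa using (hasDerivAt_id v).ofReal_comp
    have main := hasDerivAt_integral_of_dominated_loc_of_deriv_le (s := Metric.ball v₀ 1) (Metric.ball_mem_nhds v₀ zero_lt_one)
        (μ := volume.restrict (Ioi 0))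
        (F := fun (v : ℝ) (x : ℝ) => ((x ^ (σ-1) : ℝ) : ℂ) * Complex.exp (-(w v * x)))
        (F' := fun (v : ℝ) (x : ℝ) =>
          ((x ^ (σ-1) : ℝ) : ℂ) * (Complex.exp (-(w v * x)) * (Complex.I * x)))
        (x₀ := v₀) (bound := fun x => x ^ σ * Real.exp (-(p * x)))
        (Eventually.of_forall (fun v => aux_meas_complex _ _))
        ?_ ?_ ?_ ?_ ?_
    · have h2 : (∫ x in Ioi (0:ℝ),
          ((x ^ (σ-1) : ℝ) : ℂ) * (Complex.exp (-(w v₀ * x)) * (Complex.I * x)))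
          = Complex.I * ((σ / w v₀) * G v₀) := by
        have e1 : (∫ x in Ioi (0:ℝ),
            ((x ^ (σ-1) : ℝ) : ℂ) * (Complex.exp (-(w v₀ * x)) * (Complex.I * x)))
            = ∫ x in Ioi (0:ℝ), Complex.I * (((x ^ σ : ℝ) : ℂ) * Complex.exp (-(w v₀ * x))) := by
          refine setIntegral_congr_fun measurableSet_Ioi (fun x hx => ?_)
          have hx' : (0:ℝ) < x := hx
          rw [← hrpow hx']
          push_cast
          ring
        rw [e1, MeasureTheory.integral_const_mul, aux_ibp hσ0 hσ1 (by rw [hwre]; exact hp)]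
      rw [← h2]
      exact main.2
    · exact aux_int_complex (by linarith) (by rw [hwre]; exact hp)
    · exact Measurable.aestronglyMeasurable (by fun_prop)
    · -- bound
      filter_upwards [ae_restrict_mem measurableSet_Ioi] with x hx v _
      have hx' : (0:ℝ) < x := hx
      rw [← mul_assoc, norm_mul, aux_norm_eq hx', hwre]
      have : ‖Complex.I * (x:ℂ)‖ = x := by
        rw [norm_mul, Complex.norm_I, one_mul, Complex.norm_real, Real.norm_eq_abs,
          abs_of_pos hx']
      rw [this, mul_comm (x ^ (σ-1)) (Real.exp (-(p*x))), mul_assoc, hrpow hx']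
      rw [mul_comm (Real.exp (-(p*x))) (x ^ σ)]
    · exact aux_int_real (by linarith) hp
    · -- differentiability in v
      filter_upwards [ae_restrict_mem measurableSet_Ioi] with x hx v _
      have hv1 : HasDerivAt (fun v : ℝ => ((v:ℂ))) 1 v := by
        simpa using (hasDerivAt_id v).ofReal_comp
      have h1 : HasDerivAt (fun v : ℝ => -(w v * x)) (Complex.I * x) v := by
        have h := (((hv1.const_mul Complex.I).const_sub ((p:ℂ))).mul_const ((x:ℂ))).neg
        refine h.congr_deriv ?_
        symm
        ring
      exact (h1.cexp).const_mul _
  -- the function v ↦ w v ^ σ * G v is constant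
  have hH : ∀ v : ℝ, HasDerivAt (fun v => (w v) ^ (σ:ℂ) * G v) 0 v := by
    intro v
    have hv1 : HasDerivAt (fun v : ℝ => ((v:ℂ))) 1 v := by
      simpa using (hasDerivAt_id v).ofReal_comp
    have hmem : w v ∈ Complex.slitPlane := Or.inl (by rw [hwre]; exact hp)
    have hz : HasDerivAt (fun z : ℂ => ((p:ℂ) - Complex.I * z) ^ (σ:ℂ))
        ((σ:ℂ) * (w v) ^ ((σ:ℂ) - 1) * (-(Complex.I * 1))) ((v:ℂ)) :=
      HasDerivAt.cpow_const (((hasDerivAt_id ((v:ℂ))).const_mul Complex.I).const_sub ((p:ℂ))) hmem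
    have hcp : HasDerivAt (fun v : ℝ => (w v) ^ (σ:ℂ))
        ((σ:ℂ) * (w v) ^ ((σ:ℂ) - 1) * (-(Complex.I * 1))) v := hz.comp_ofReal
    have hprod := hcp.mul (hGd v)
    refine hprod.congr_deriv ?_
    symm
    have e1 : (w v) ^ ((σ:ℂ) - 1) = (w v) ^ (σ:ℂ) / (w v) := by
      rw [Complex.cpow_sub _ _ (hw0 v), Complex.cpow_one]
    rw [e1]
    field_simp
    ring
  have hconst : (w v) ^ (σ:ℂ) * G v = (w 0) ^ (σ:ℂ) * G 0 :=
    is_const_of_deriv_eq_zero (fun v => (hH v).differentiableAt) (fun v => (hH v).deriv) v 0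
  -- base case
  have hw0eq : w 0 = (p:ℂ) := by simp [hw]
  have hG0 : G 0 = (Real.Gamma σ : ℂ) * ((p:ℂ)) ^ (-(σ:ℂ)) := by
    have base := integral_cpow_mul_exp_neg_mul_Ioi
      (a := (σ:ℂ)) (r := p) (by simpa using hσ0) hp
    have e1 : G 0 = ∫ t in Ioi (0:ℝ), (t:ℂ) ^ ((σ:ℂ) - 1) * Complex.exp (-(p * t)) := by
      refine setIntegral_congr_fun measurableSet_Ioi (fun x hx => ?_)
      have hx' : (0:ℝ) < x := hx
      rw [hw0eq, Complex.ofReal_cpow hx'.le]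
      push_cast
      ring_nf
    rw [e1, base]
    have e2 : ((1:ℂ) / p) ^ (σ:ℂ) = ((p:ℂ)) ^ (-(σ:ℂ)) := by
      have harg : ((p:ℂ)).arg ≠ Real.pi := by
        rw [Complex.arg_ofReal_of_nonneg hp.le]
        exact (Real.pi_ne_zero).symm
      rw [one_div, Complex.inv_cpow _ _ harg, ← Complex.cpow_neg]
    rw [e2, Complex.Gamma_ofReal, mul_comm]
  -- conclude
  have hpow_ne : (w v) ^ (σ:ℂ) ≠ 0 := by
    simp [Complex.cpow_eq_zero_iff, hw0 v]
  have hΓ : (w v) ^ (σ:ℂ) * G v = (Real.Gamma σ : ℂ) := by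
    rw [hconst, hw0eq, hG0]
    rw [Complex.cpow_neg]
    have hpne : ((p:ℂ)) ^ (σ:ℂ) ≠ 0 := by
      simp [Complex.cpow_eq_zero_iff]
      intro h
      exact absurd h (by exact_mod_cast hp.ne')
    field_simp
  have : G v = (Real.Gamma σ : ℂ) * (w v) ^ (-(σ:ℂ)) := by
    rw [Complex.cpow_neg]
    field_simp at hΓ ⊢
    linear_combination hΓ
  exact this

lemma aux_J {α u p : ℝ} (hα0 : 0 < α) (hα1 : α < 1) (hp : 0 < p) :
    (∫ x in Ioi (0:ℝ),
        (Complex.exp (Complex.I * u * x) - 1) * ((Real.exp (-(p * x)) * x ^ (-1 - α) : ℝ) : ℂ))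
      = -((Real.Gamma (1 - α) / α : ℝ) : ℂ)
          * (((p:ℂ) - Complex.I * u) ^ (α:ℂ) - ((p:ℂ)) ^ (α:ℂ)) := by
  have hre : ∀ s : ℝ, ((p:ℂ) - Complex.I * ((s * u : ℝ):ℂ)).re = p := fun s => by simp
  have hrp : ∀ {x : ℝ}, 0 < x → x ^ (-1 - α) * x = x ^ (-α) := by
    intro x hx
    rw [show (-α) = (-1 - α) + 1 by ring, Real.rpow_add hx, Real.rpow_one]
  set F : ℝ → ℝ → ℂ := fun x s =>
    Complex.I * u * (((x ^ (-α) : ℝ) : ℂ)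
      * Complex.exp (-(((p:ℂ) - Complex.I * ((s * u : ℝ):ℂ)) * x))) with hF
  -- pointwise representation
  have key : ∀ x : ℝ, 0 < x →
      (Complex.exp (Complex.I * u * x) - 1) * ((Real.exp (-(p * x)) * x ^ (-1 - α) : ℝ) : ℂ)
        = ∫ s in (0:ℝ)..1, F x s := by
    intro x hx
    have hder : ∀ s ∈ Set.uIcc (0:ℝ) 1,
        HasDerivAt (fun s : ℝ => ((x ^ (-1 - α) : ℝ) : ℂ)
          * Complex.exp (-(((p:ℂ) - Complex.I * ((s * u : ℝ):ℂ)) * x))) (F x s) s := by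
      intro s _
      have hs : HasDerivAt (fun s : ℝ => ((s * u : ℝ) : ℂ)) (((1:ℝ) * u : ℝ):ℂ) s :=
        ((hasDerivAt_id s).mul_const u).ofReal_comp
      have h := ((((hs.const_mul Complex.I).const_sub ((p:ℂ))).mul_const
        ((x:ℂ))).neg.cexp).const_mul ((x ^ (-1 - α) : ℝ) : ℂ)
      refine h.congr_deriv ?_
      symm
      rw [hF]
      simp only [Pi.neg_apply]
      push_cast [← hrp hx]
      ring
    have hint : IntervalIntegrable (F x) volume 0 1 := by
      apply Continuous.intervalIntegrable
      fun_prop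
    have h := intervalIntegral.integral_eq_sub_of_hasDerivAt hder hint
    rw [h]
    rw [show ((1:ℝ) * u : ℝ) = u by ring, show ((0:ℝ) * u : ℝ) = 0 by ring]
    rw [show -(((p:ℂ) - Complex.I * ((u:ℝ):ℂ)) * x) = Complex.I * u * x + -((p:ℂ) * x) by
      ring]
    rw [Complex.exp_add]
    push_cast [Complex.ofReal_exp]
    simp
    ring
  -- Fubini
  have hprod : Integrable (fun z : ℝ × ℝ => F z.1 z.2)
      ((volume.restrict (Ioi 0)).prod (volume.restrict (Ioc 0 1))) := by
    have h1 : Integrable (fun x : ℝ => |u| * (x ^ (-α) * Real.exp (-(p * x))))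
        (volume.restrict (Ioi 0)) := (aux_int_real (by linarith) hp).const_mul _
    have h2 : Integrable (fun _ : ℝ => (1:ℝ)) (volume.restrict (Ioc 0 1)) :=
      integrableOn_const (by rw [Real.volume_Ioc]; exact ENNReal.ofReal_ne_top)
    have hbound := h1.mul_prod h2
    simp only [mul_one] at hbound
    apply Integrable.mono' hbound
    · apply Measurable.aestronglyMeasurable
      fun_prop
    · rw [Measure.prod_restrict]
      filter_upwards [ae_restrict_mem (measurableSet_Ioi.prod measurableSet_Ioc)] with z hz
      have hx : (0:ℝ) < z.1 := hz.1
      rw [hF]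
      simp only
      rw [norm_mul, aux_norm_eq hx, hre]
      have hIu : ‖Complex.I * ((u:ℝ):ℂ)‖ = |u| := by
        rw [norm_mul, Complex.norm_I, one_mul, Complex.norm_real, Real.norm_eq_abs]
      rw [hIu]
  have swap := MeasureTheory.integral_integral_swap (μ := volume.restrict (Ioi 0))
    (ν := volume.restrict (Ioc 0 1)) (f := F) hprod
  have lhs_eq : (∫ x in Ioi (0:ℝ),
      (Complex.exp (Complex.I * u * x) - 1) * ((Real.exp (-(p * x)) * x ^ (-1 - α) : ℝ) : ℂ))
      = ∫ x in Ioi (0:ℝ), ∫ s in Ioc (0:ℝ) 1, F x s := by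
    refine setIntegral_congr_fun measurableSet_Ioi (fun x hx => ?_)
    rw [key x hx, intervalIntegral.integral_of_le zero_le_one]
  rw [lhs_eq, swap]
  -- inner integral via aux_gamma
  have inner_eq : ∀ s : ℝ, (∫ x in Ioi (0:ℝ), F x s)
      = Complex.I * u * ((Real.Gamma (1 - α) : ℂ)
          * ((p:ℂ) - Complex.I * ((s * u : ℝ):ℂ)) ^ (-(((1 - α : ℝ)):ℂ))) := by
    intro s
    rw [hF]
    simp only
    rw [MeasureTheory.integral_const_mul]
    congr 1
    have := aux_gamma (by linarith : (0:ℝ) < 1 - α) (by linarith) hp (s * u)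
    rw [show ((1:ℝ) - α - 1) = -α by ring] at this
    exact this
  have hexp : (-(((1 - α : ℝ)):ℂ)) = (α:ℂ) - 1 := by push_cast; ring
  have hαne : ((α:ℝ):ℂ) ≠ 0 := by exact_mod_cast hα0.ne'
  have outer : (∫ s in Ioc (0:ℝ) 1, ∫ x in Ioi (0:ℝ), F x s)
      = -((Real.Gamma (1 - α) / α : ℝ) : ℂ)
          * (((p:ℂ) - Complex.I * u) ^ (α:ℂ) - ((p:ℂ)) ^ (α:ℂ)) := by
    rw [← intervalIntegral.integral_of_le zero_le_one]
    have hΨder : ∀ s ∈ Set.uIcc (0:ℝ) 1,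
        HasDerivAt (fun s : ℝ => -((Real.Gamma (1 - α) / α : ℝ) : ℂ)
            * ((p:ℂ) - Complex.I * ((s:ℂ) * u)) ^ (α:ℂ))
          (∫ x in Ioi (0:ℝ), F x s) s := by
      intro s _
      have hmem : ((p:ℂ) - Complex.I * ((s:ℂ) * (u:ℂ))) ∈ Complex.slitPlane := by
        left
        have h : ((p:ℂ) - Complex.I * ((s:ℂ) * (u:ℂ))) = ((p:ℂ) - Complex.I * ((s*u:ℝ):ℂ)) := by
          push_cast; ring
        rw [h, hre s]
        exact hp
      have hz : HasDerivAt (fun z : ℂ => ((p:ℂ) - Complex.I * (z * u)) ^ (α:ℂ))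
          ((α:ℂ) * ((p:ℂ) - Complex.I * ((s:ℂ) * u)) ^ ((α:ℂ) - 1) * (-(Complex.I * (1 * u))))
          ((s:ℂ)) :=
        HasDerivAt.cpow_const
          ((((hasDerivAt_id ((s:ℂ))).mul_const ((u:ℂ))).const_mul Complex.I).const_sub ((p:ℂ)))
          hmem
      have hcp := (hz.comp_ofReal).const_mul (-((Real.Gamma (1 - α) / α : ℝ) : ℂ))
      refine hcp.congr_deriv ?_
      symm
      rw [inner_eq s, hexp]
      push_cast
      field_simp
    have hint : IntervalIntegrable (fun s : ℝ => ∫ x in Ioi (0:ℝ), F x s) volume 0 1 := by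
      apply Continuous.intervalIntegrable
      rw [show (fun s : ℝ => ∫ x in Ioi (0:ℝ), F x s) = fun s : ℝ => Complex.I * u
          * ((Real.Gamma (1 - α) : ℂ) * ((p:ℂ) - Complex.I * ((s * u : ℝ):ℂ))
            ^ (-(((1 - α : ℝ)):ℂ))) from funext inner_eq]
      refine continuous_const.mul (continuous_const.mul ?_)
      refine continuous_iff_continuousAt.mpr (fun s => ?_)
      have hk : Continuous (fun s : ℝ => (p:ℂ) - Complex.I * ((s * u : ℝ):ℂ)) := by fun_prop
      exact (continuousAt_cpow_const (Or.inl (by rw [hre s]; exact hp))).comp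
        hk.continuousAt
    rw [intervalIntegral.integral_eq_sub_of_hasDerivAt hΨder hint]
    norm_num
    ring
  rw [outer]

/-- For `0 < α < 1`, `β, c, b, t > 0` and `a = e^{-bt}`, the Lévy–Khintchine
integral of the OU-CTS innovation Lévy density
`ν_Z(x) = (c/(b x)) ∫_x^{x/a} e^{-β y} y^{-1-α} dy` satisfies, for every real `u`,
`∫_0^∞ (e^{iux} − 1) ν_Z(x) dx
  = −(c β^α Γ(1−α)/(α b)) [ ∫_β^{β/a} z^{−1−α} (z − iu)^α dz + log a ]`,
where both integrals converge (the `z`-integral being a complex-valued integral over the real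
interval `[β, β/a]` with principal complex powers). -/
theorem ou_cts_innovation_charexp
    (α β c b t : ℝ) (hα0 : 0 < α) (hα1 : α < 1)
    (hβ : 0 < β) (hc : 0 < c) (hb : 0 < b) (ht : 0 < t)
    (a : ℝ) (ha : a = Real.exp (-(b * t)))
    (νZ : ℝ → ℝ)
    (hνZ : ∀ x, 0 < x →
      νZ x = c / (b * x) * ∫ y in x..(x / a), Real.exp (-(β * y)) * y ^ (-1 - α))
    (u : ℝ) :
    IntegrableOn
        (fun x : ℝ => (Complex.exp (Complex.I * u * x) - 1) * (νZ x : ℂ)) (Ioi 0) volume ∧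
      IntervalIntegrable
        (fun z : ℝ => (z : ℂ) ^ (-1 - α : ℂ) * ((z : ℂ) - Complex.I * u) ^ (α : ℂ))
        volume β (β / a) ∧
      ∫ x in Ioi (0 : ℝ), (Complex.exp (Complex.I * u * x) - 1) * (νZ x : ℂ) =
        -((c * β ^ α * Real.Gamma (1 - α) / (α * b) : ℝ) : ℂ) *
          ((∫ z in β..(β / a),
              (z : ℂ) ^ (-1 - α : ℂ) * ((z : ℂ) - Complex.I * u) ^ (α : ℂ)) +
            (Real.log a : ℂ)) := by
  have ha0 : 0 < a := by rw [ha]; exact Real.exp_pos _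
  have ha1 : a < 1 := by
    rw [ha]
    exact Real.exp_lt_one_iff.mpr (by nlinarith)
  have h1a : (1:ℝ) < 1 / a := (one_lt_div ha0).mpr ha1
  have h1le : (1:ℝ) ≤ 1 / a := h1a.le
  have hββ : β ≤ β / a := by
    rw [le_div_iff₀ ha0]
    nlinarith
  have hrp : ∀ {x : ℝ}, 0 < x → x ^ (-1 - α) * x = x ^ (-α) := by
    intro x hx
    rw [show (-α) = (-1 - α) + 1 by ring, Real.rpow_add hx, Real.rpow_one]
  -- the rewritten kernel
  set F : ℝ → ℝ → ℂ := fun x s => (Complex.exp (Complex.I * u * x) - 1)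
    * (((c / b) * (Real.exp (-(β * s * x)) * (x ^ (-1 - α) * s ^ (-1 - α))) : ℝ) : ℂ) with hFdef
  have hν : ∀ x : ℝ, 0 < x → νZ x
      = ∫ s in Ioc (1:ℝ) (1/a),
          (c / b) * (Real.exp (-(β * s * x)) * (x ^ (-1 - α) * s ^ (-1 - α))) := by
    intro x hx
    have e1 : (∫ y in x..(x/a), Real.exp (-(β * y)) * y ^ (-1 - α))
        = x * ∫ s in (1:ℝ)..(1/a), Real.exp (-(β * (s * x))) * (s * x) ^ (-1 - α) := by
      have hsub := intervalIntegral.smul_integral_comp_mul_right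
        (a := 1) (b := 1/a) (fun y => Real.exp (-(β * y)) * y ^ (-1 - α)) x
      rw [one_mul, one_div_mul_eq_div] at hsub
      rw [← hsub, smul_eq_mul]
    rw [hνZ x hx, e1]
    rw [show c / (b * x) * (x * ∫ s in (1:ℝ)..(1/a),
          Real.exp (-(β * (s * x))) * (s * x) ^ (-1 - α))
        = (c / b) * ∫ s in (1:ℝ)..(1/a), Real.exp (-(β * (s * x))) * (s * x) ^ (-1 - α) by
      field_simp]
    rw [intervalIntegral.integral_of_le h1le, ← MeasureTheory.integral_const_mul]
    refine setIntegral_congr_fun measurableSet_Ioc (fun s hs => ?_)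
    have hs0 : 0 < s := lt_trans zero_lt_one hs.1
    rw [Real.mul_rpow hs0.le hx.le]
    ring_nf
  have hGx : ∀ x : ℝ, 0 < x →
      (Complex.exp (Complex.I * u * x) - 1) * ((νZ x : ℝ) : ℂ)
        = ∫ s in Ioc (1:ℝ) (1/a), F x s := by
    intro x hx
    rw [hν x hx]
    have hcast : ((∫ s in Ioc (1:ℝ) (1/a),
          (c / b) * (Real.exp (-(β * s * x)) * (x ^ (-1 - α) * s ^ (-1 - α))) : ℝ) : ℂ)
        = ∫ s in Ioc (1:ℝ) (1/a),
            (((c / b) * (Real.exp (-(β * s * x)) * (x ^ (-1 - α) * s ^ (-1 - α))) : ℝ) : ℂ) :=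
      (_root_.integral_ofReal (𝕜 := ℂ)).symm
    rw [hcast, ← MeasureTheory.integral_const_mul]
  -- product integrability
  have hFint : Integrable (fun z : ℝ × ℝ => F z.1 z.2)
      ((volume.restrict (Ioi 0)).prod (volume.restrict (Ioc 1 (1/a)))) := by
    have hD : Integrable (fun x : ℝ => |u| * ((c/b) * (x ^ (-α) * Real.exp (-(β * x)))))
        (volume.restrict (Ioi 0)) :=
      ((aux_int_real (by linarith) hβ).const_mul _).const_mul _
    have h2 : Integrable (fun _ : ℝ => (1:ℝ)) (volume.restrict (Ioc 1 (1/a))) :=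
      integrableOn_const (by rw [Real.volume_Ioc]; exact ENNReal.ofReal_ne_top)
    have hbound := hD.mul_prod h2
    simp only [mul_one] at hbound
    apply Integrable.mono' hbound
    · apply Measurable.aestronglyMeasurable
      fun_prop
    · rw [Measure.prod_restrict]
      filter_upwards [ae_restrict_mem (measurableSet_Ioi.prod measurableSet_Ioc)] with z hz
      have hx : (0:ℝ) < z.1 := hz.1
      have hs1 : (1:ℝ) < z.2 := hz.2.1
      rw [hFdef]
      simp only
      rw [norm_mul, Complex.norm_real, Real.norm_eq_abs]
      have h1 : ‖Complex.exp (Complex.I * u * z.1) - 1‖ ≤ |u| * z.1 := by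
        have h := aux_exp_bound (u * z.1)
        rw [show Complex.I * ((u * z.1 : ℝ):ℂ) = Complex.I * u * z.1 by push_cast; ring] at h
        calc ‖Complex.exp (Complex.I * u * z.1) - 1‖ ≤ |u * z.1| := h
          _ = |u| * z.1 := by rw [abs_mul, abs_of_pos hx]
      have hnn : (0:ℝ) ≤ (c/b) * (Real.exp (-(β * z.2 * z.1))
          * (z.1 ^ (-1 - α) * z.2 ^ (-1 - α))) := by positivity
      rw [_root_.abs_of_nonneg hnn]
      have h2' : (c/b) * (Real.exp (-(β * z.2 * z.1)) * (z.1 ^ (-1 - α) * z.2 ^ (-1 - α)))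
          ≤ (c/b) * (Real.exp (-(β * z.1)) * (z.1 ^ (-1 - α) * 1)) := by
        apply mul_le_mul_of_nonneg_left _ (by positivity)
        apply mul_le_mul
        · apply Real.exp_le_exp.mpr
          have : β * z.1 ≤ β * z.2 * z.1 := by
            nlinarith [mul_nonneg (mul_nonneg hβ.le (sub_nonneg.mpr hs1.le)) hx.le]
          linarith
        · exact mul_le_mul_of_nonneg_left
            (Real.rpow_le_one_of_one_le_of_nonpos hs1.le (by linarith)) (by positivity)
        · positivity
        · positivity
      calc ‖Complex.exp (Complex.I * u * z.1) - 1‖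
            * ((c/b) * (Real.exp (-(β * z.2 * z.1)) * (z.1 ^ (-1 - α) * z.2 ^ (-1 - α))))
          ≤ (|u| * z.1) * ((c/b) * (Real.exp (-(β * z.1)) * (z.1 ^ (-1 - α) * 1))) := by
            apply mul_le_mul h1 h2' (by positivity) (by positivity)
        _ = |u| * ((c/b) * (z.1 ^ (-α) * Real.exp (-(β * z.1)))) := by
            rw [mul_one, ← hrp hx]
            ring
  -- interval integrability of the two cpow integrands
  have hzpos : ∀ z ∈ Set.uIcc β (β/a), (0:ℝ) < z := by
    intro z hz
    rw [Set.uIcc_of_le hββ] at hz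
    exact lt_of_lt_of_le hβ hz.1
  have hcont1 : IntervalIntegrable
      (fun z : ℝ => (z : ℂ) ^ (-1 - α : ℂ) * ((z : ℂ) - Complex.I * u) ^ (α : ℂ))
      volume β (β / a) := by
    apply ContinuousOn.intervalIntegrable
    intro z hz
    have hz0 := hzpos z hz
    apply ContinuousWithinAt.mul
    · exact ((continuousAt_cpow_const (Or.inl (by simpa using hz0))).comp
        Complex.continuous_ofReal.continuousAt).continuousWithinAt
    · refine ((continuousAt_cpow_const (Or.inl ?_)).comp
        ((Complex.continuous_ofReal.sub continuous_const).continuousAt)).continuousWithinAt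
      simpa using hz0
  have hcont2 : IntervalIntegrable
      (fun z : ℝ => (z : ℂ) ^ (-1 - α : ℂ) * ((z : ℂ)) ^ (α : ℂ)) volume β (β / a) := by
    apply ContinuousOn.intervalIntegrable
    intro z hz
    have hz0 := hzpos z hz
    apply ContinuousWithinAt.mul
    · exact ((continuousAt_cpow_const (Or.inl (by simpa using hz0))).comp
        Complex.continuous_ofReal.continuousAt).continuousWithinAt
    · exact ((continuousAt_cpow_const (Or.inl (by simpa using hz0))).comp
        Complex.continuous_ofReal.continuousAt).continuousWithinAt
  refine ⟨?_, hcont1, ?_⟩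
  · apply (hFint.integral_prod_left).congr
    filter_upwards [ae_restrict_mem measurableSet_Ioi] with x hx
    exact (hGx x hx).symm
  -- the evaluation
  have step1 : (∫ x in Ioi (0:ℝ), (Complex.exp (Complex.I * u * x) - 1) * ((νZ x : ℝ):ℂ))
      = ∫ s in Ioc (1:ℝ) (1/a), ∫ x in Ioi (0:ℝ), F x s := by
    rw [setIntegral_congr_fun measurableSet_Ioi hGx]
    exact MeasureTheory.integral_integral_swap hFint
  have hJs : ∀ s ∈ Ioc (1:ℝ) (1/a), (∫ x in Ioi (0:ℝ), F x s)
      = ((c/b * s ^ (-1-α) : ℝ) : ℂ) * (-((Real.Gamma (1-α)/α : ℝ) : ℂ)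
          * ((((β*s : ℝ):ℂ) - Complex.I * u) ^ (α:ℂ) - (((β*s : ℝ):ℂ)) ^ (α:ℂ))) := by
    intro s hs
    have hs0 : (0:ℝ) < s := lt_trans zero_lt_one hs.1
    have hps : 0 < β * s := mul_pos hβ hs0
    have e1 : (∫ x in Ioi (0:ℝ), F x s)
        = ((c/b * s ^ (-1-α) : ℝ) : ℂ) * ∫ x in Ioi (0:ℝ),
            (Complex.exp (Complex.I * u * x) - 1)
              * ((Real.exp (-(β * s * x)) * x ^ (-1 - α) : ℝ):ℂ) := by
      rw [← MeasureTheory.integral_const_mul]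
      refine setIntegral_congr_fun measurableSet_Ioi (fun x hx => ?_)
      rw [hFdef]
      simp only
      push_cast
      ring
    rw [e1, aux_J hα0 hα1 hps]
  have step2 : (∫ s in Ioc (1:ℝ) (1/a), ∫ x in Ioi (0:ℝ), F x s)
      = ∫ s in (1:ℝ)..(1/a), ((c/b * s ^ (-1-α) : ℝ) : ℂ) * (-((Real.Gamma (1-α)/α : ℝ) : ℂ)
          * ((((β*s : ℝ):ℂ) - Complex.I * u) ^ (α:ℂ) - (((β*s : ℝ):ℂ)) ^ (α:ℂ))) := by
    rw [intervalIntegral.integral_of_le h1le]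
    exact setIntegral_congr_fun measurableSet_Ioc hJs
  set C : ℂ := ((c/b : ℝ):ℂ) * (-((Real.Gamma (1-α)/α : ℝ) : ℂ)) with hC
  have step3 : (∫ s in (1:ℝ)..(1/a), ((c/b * s ^ (-1-α) : ℝ) : ℂ)
        * (-((Real.Gamma (1-α)/α : ℝ) : ℂ)
          * ((((β*s : ℝ):ℂ) - Complex.I * u) ^ (α:ℂ) - (((β*s : ℝ):ℂ)) ^ (α:ℂ))))
      = C * ∫ s in (1:ℝ)..(1/a), ((s ^ (-1-α) : ℝ):ℂ)
          * ((((β*s : ℝ):ℂ) - Complex.I * u) ^ (α:ℂ) - (((β*s : ℝ):ℂ)) ^ (α:ℂ)) := by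
    rw [← intervalIntegral.integral_const_mul]
    apply intervalIntegral.integral_congr
    intro s _
    rw [hC]
    push_cast
    ring
  set g : ℝ → ℂ := fun z => ((z ^ (-1-α) : ℝ):ℂ)
    * (((z:ℂ) - Complex.I * u) ^ (α:ℂ) - ((z:ℂ)) ^ (α:ℂ)) with hg
  have step4 : (∫ s in (1:ℝ)..(1/a), ((s ^ (-1-α) : ℝ):ℂ)
        * ((((β*s : ℝ):ℂ) - Complex.I * u) ^ (α:ℂ) - (((β*s : ℝ):ℂ)) ^ (α:ℂ)))
      = ((β ^ (1+α) : ℝ):ℂ) * ∫ s in (1:ℝ)..(1/a), g (β * s) := by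
    rw [← intervalIntegral.integral_const_mul]
    apply intervalIntegral.integral_congr
    intro s hs
    have hs0 : 0 < s := by
      rw [Set.uIcc_of_le h1le] at hs
      linarith [hs.1]
    rw [hg]
    simp only
    have e2 : (β*s) ^ (-1-α) = β ^ (-1-α) * s ^ (-1-α) := Real.mul_rpow hβ.le hs0.le
    have e3 : ((β ^ (1+α) : ℝ):ℂ) * ((β ^ (-1-α) : ℝ):ℂ) = 1 := by
      rw [← Complex.ofReal_mul, ← Real.rpow_add hβ]
      norm_num
    rw [e2]
    push_cast
    linear_combination (-((((s ^ (-1-α) : ℝ):ℂ))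
      * ((((β:ℂ)*s - Complex.I * u) ^ (α:ℂ) - (((β:ℂ)*s)) ^ (α:ℂ))))) * e3
  have step5 : (∫ s in (1:ℝ)..(1/a), g (β * s)) = β⁻¹ • ∫ z in β..(β/a), g z := by
    rw [intervalIntegral.integral_comp_mul_left g hβ.ne', mul_one, mul_one_div]
  have step6 : (∫ z in β..(β/a), g z)
      = (∫ z in β..(β/a), (z : ℂ) ^ (-1 - α : ℂ) * ((z : ℂ) - Complex.I * u) ^ (α : ℂ))
        + ((Real.log a : ℝ):ℂ) := by
    have e6 : (∫ z in β..(β/a), g z)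
        = (∫ z in β..(β/a), (z : ℂ) ^ (-1 - α : ℂ) * ((z : ℂ) - Complex.I * u) ^ (α : ℂ))
          - ∫ z in β..(β/a), (z : ℂ) ^ (-1 - α : ℂ) * ((z : ℂ)) ^ (α : ℂ) := by
      rw [← intervalIntegral.integral_sub hcont1 hcont2]
      apply intervalIntegral.integral_congr
      intro z hz
      have hz0 := hzpos z hz
      rw [hg]
      simp only
      rw [Complex.ofReal_cpow hz0.le,
        show ((-1-α : ℝ):ℂ) = (-1 - (α:ℂ)) by push_cast; ring]
      ring
    have e7 : (∫ z in β..(β/a), (z : ℂ) ^ (-1 - α : ℂ) * ((z : ℂ)) ^ (α : ℂ))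
        = -((Real.log a : ℝ):ℂ) := by
      rw [intervalIntegral.integral_congr (g := fun z : ℝ => ((1/z : ℝ):ℂ))
        (fun z hz => ?_), intervalIntegral.integral_ofReal]
      · rw [integral_one_div (fun h => by
          have := hzpos 0 h
          exact lt_irrefl _ this)]
        rw [show (β/a)/β = 1/a by field_simp, one_div, Real.log_inv]
        push_cast
        ring
      · have hz0 := hzpos z hz
        rw [show ((-1 - α : ℂ)) = ((-1-α : ℝ):ℂ) by push_cast; ring,
          ← Complex.ofReal_cpow hz0.le, show ((α : ℂ)) = ((α : ℝ):ℂ) by norm_cast,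
          ← Complex.ofReal_cpow hz0.le, ← Complex.ofReal_mul]
        congr 1
        rw [← Real.rpow_add hz0]
        rw [show (-1 - α + α : ℝ) = -1 by ring, Real.rpow_neg_one, one_div]
    rw [e6, e7]
    ring
  rw [step1, step2, step3, step4, step5, step6]
  rw [Complex.real_smul]
  have hconst : C * ((β ^ (1+α) : ℝ):ℂ) * ((β⁻¹ : ℝ):ℂ)
      = -((c * β ^ α * Real.Gamma (1 - α) / (α * b) : ℝ) : ℂ) := by
    rw [hC]
    have e8 : (β : ℝ) ^ (1+α) = β * β ^ α := by
      rw [Real.rpow_add hβ, Real.rpow_one]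
    have hreal : (c/b) * (Real.Gamma (1-α)/α) * (β ^ (1+α)) * β⁻¹
        = c * β ^ α * Real.Gamma (1-α) / (α*b) := by
      rw [e8]
      field_simp
    rw [← hreal]
    push_cast
    ring
  rw [← hconst]
  ring
end

section
/- Let 0 < α < 1, 0 < a < 1, β > 0 and D = 1 − a^α + a^α log(a^α). Then the function f_J(x) = (α a^α / D) ∫_1^{1/a} (x^{−α} (βv)^{1−α} e^{−βvx} / Γ(1−α)) · ((v^α − 1)/v) dv is a probability density on (0, ∞): it is nonnegative and ∫_0^∞ f_J(x) dx = 1. -/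
open MeasureTheory Set

/-- For `0 < α < 1`, `0 < a < 1`, `β > 0` and
`D = 1 − a^α + a^α log(a^α)`, the jump-size density
`f_J(x) = (α a^α / D) ∫_1^{1/a} (x^{−α}(βv)^{1−α} e^{−βvx}/Γ(1−α)) ((v^α − 1)/v) dv`
is a probability density on `(0, ∞)`: it is nonnegative and integrates to `1`. -/
theorem jump_density_is_probability_density
    (α a β : ℝ) (hα0 : 0 < α) (hα1 : α < 1) (ha0 : 0 < a) (ha1 : a < 1) (hβ : 0 < β)
    (D : ℝ) (hD : D = 1 - a ^ α + a ^ α * Real.log (a ^ α))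
    (fJ : ℝ → ℝ)
    (hfJ : ∀ x : ℝ, 0 < x →
      fJ x = α * a ^ α / D *
        ∫ v in (1 : ℝ)..(1 / a),
          x ^ (-α) * (β * v) ^ (1 - α) * Real.exp (-(β * v * x)) / Real.Gamma (1 - α) *
            ((v ^ α - 1) / v)) :
    (∀ x ∈ Ioi (0 : ℝ), 0 ≤ fJ x) ∧ ∫ x in Ioi (0 : ℝ), fJ x = 1 := by
  have h1a : (1:ℝ) < 1/a := one_lt_one_div ha0 ha1
  have hΓ : 0 < Real.Gamma (1 - α) := Real.Gamma_pos_of_pos (by linarith)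
  -- positivity of D
  have ht0 : 0 < a ^ α := Real.rpow_pos_of_pos ha0 _
  have ht1 : a ^ α < 1 := Real.rpow_lt_one ha0.le ha1 hα0
  have hDpos : 0 < D := by
    have hlog : Real.log (a ^ α)⁻¹ < (a ^ α)⁻¹ - 1 :=
      Real.log_lt_sub_one_of_pos (by positivity) (by
        intro h
        have : a ^ α = 1 := by field_simp at h; linarith
        linarith)
    rw [Real.log_inv] at hlog
    rw [hD]
    nlinarith [mul_lt_mul_of_pos_left hlog ht0, mul_inv_cancel₀ (ne_of_gt ht0)]
  -- nonnegativity of the integrand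
  have hg_nonneg : ∀ x : ℝ, 0 < x → ∀ v : ℝ, 1 ≤ v →
      0 ≤ x ^ (-α) * (β * v) ^ (1 - α) * Real.exp (-(β * v * x)) / Real.Gamma (1 - α) *
        ((v ^ α - 1) / v) := by
    intro x hx v hv
    have hv0 : 0 < v := lt_of_lt_of_le one_pos hv
    have h1 : (1:ℝ) ≤ v ^ α := by
      calc (1:ℝ) = 1 ^ α := (Real.one_rpow α).symm
        _ ≤ v ^ α := Real.rpow_le_rpow (by norm_num) hv hα0.le
    have : 0 ≤ (v ^ α - 1) / v := div_nonneg (by linarith) hv0.le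
    positivity
  have hnonneg : ∀ x ∈ Ioi (0:ℝ), 0 ≤ fJ x := by
    intro x hx
    rw [hfJ x hx]
    refine mul_nonneg (by positivity) ?_
    exact intervalIntegral.integral_nonneg h1a.le fun v hv => hg_nonneg x hx v hv.1
  refine ⟨hnonneg, ?_⟩
  -- the double integral
  set g : ℝ → ℝ → ℝ := fun x v =>
    x ^ (-α) * (β * v) ^ (1 - α) * Real.exp (-(β * v * x)) / Real.Gamma (1 - α) *
      ((v ^ α - 1) / v) with hg
  -- integrability in x for each v ≥ 1
  have hint_x : ∀ v : ℝ, 1 ≤ v → IntegrableOn (fun x => g x v) (Ioi 0) := by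
    intro v hv
    have hv0 : 0 < v := lt_of_lt_of_le one_pos hv
    have hbase : IntegrableOn (fun x : ℝ => x ^ (-α) * Real.exp (-(β * v * x))) (Ioi 0) := by
      have := integrableOn_rpow_mul_exp_neg_mul_rpow (p := 1) (s := -α) (b := β * v)
        (by linarith) one_pos (by positivity)
      refine this.congr_fun (fun x hx => ?_) measurableSet_Ioi
      simp only [Real.rpow_one, neg_mul]
    have h2 : IntegrableOn (fun x : ℝ => x ^ (-α) * Real.exp (-(β * v * x)) *
        ((β * v) ^ (1 - α) / Real.Gamma (1 - α) * ((v ^ α - 1) / v))) (Ioi 0) :=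
      hbase.mul_const _
    refine h2.congr_fun (fun x hx => ?_) measurableSet_Ioi
    simp only [hg]; ring
  -- value of the x-integral
  have hval_x : ∀ v : ℝ, 1 ≤ v → ∫ x in Ioi (0:ℝ), g x v = (v ^ α - 1) / v := by
    intro v hv
    have hv0 : 0 < v := lt_of_lt_of_le one_pos hv
    have hbv : 0 < β * v := by positivity
    have hX : ∫ x in Ioi (0:ℝ), x ^ (-α) * Real.exp (-(β * v * x))
        = (1/(β*v)) ^ (1-α) * Real.Gamma (1-α) := by
      have := Real.integral_rpow_mul_exp_neg_mul_Ioi (a := 1-α) (r := β*v) (by linarith) hbv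
      rw [show (1-α) - 1 = -α by ring] at this
      exact this
    have heq : ∀ x : ℝ, g x v = (x ^ (-α) * Real.exp (-(β * v * x)))
        * ((β * v) ^ (1 - α) / Real.Gamma (1 - α) * ((v ^ α - 1) / v)) := by
      intro x; simp only [hg]; ring
    simp_rw [heq]
    rw [MeasureTheory.integral_mul_const, hX, one_div, Real.inv_rpow hbv.le]
    field_simp
  -- measurability of g on the product
  have hmeas : AEStronglyMeasurable (fun p : ℝ × ℝ => g p.1 p.2)
      ((volume.restrict (Ioi (0:ℝ))).prod (volume.restrict (Ioc (1:ℝ) (1/a)))) := by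
    apply Measurable.aestronglyMeasurable
    apply Measurable.mul
    apply Measurable.div
    · exact ((measurable_fst.pow_const _).mul
        ((measurable_const.mul measurable_snd).pow_const _)).mul
        (((measurable_const.mul measurable_snd).mul measurable_fst).neg.exp)
    · exact measurable_const
    · exact ((measurable_snd.pow_const _).sub measurable_const).div measurable_snd
  -- integrability on the product
  have hprod : Integrable (fun p : ℝ × ℝ => g p.1 p.2)
      ((volume.restrict (Ioi (0:ℝ))).prod (volume.restrict (Ioc (1:ℝ) (1/a)))) := by
    rw [MeasureTheory.integrable_prod_iff' hmeas]
    constructor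
    · filter_upwards [ae_restrict_mem measurableSet_Ioc] with v hv
      exact hint_x v hv.1.le
    · have hcont : IntegrableOn (fun v : ℝ => (v ^ α - 1) / v) (Ioc 1 (1/a)) := by
        apply (ContinuousOn.integrableOn_Icc ?_).mono_set Ioc_subset_Icc_self
        apply ContinuousOn.div
        · exact (continuousOn_id.rpow_const fun v hv => Or.inr hα0.le).sub continuousOn_const
        · exact continuousOn_id
        · exact fun v hv => ne_of_gt (lt_of_lt_of_le one_pos hv.1)
      refine hcont.congr ?_
      filter_upwards [ae_restrict_mem measurableSet_Ioc] with v hv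
      have h1 : ∫ x in Ioi (0:ℝ), ‖g x v‖ = ∫ x in Ioi (0:ℝ), g x v := by
        refine setIntegral_congr_fun measurableSet_Ioi fun x hx => ?_
        exact Real.norm_of_nonneg (hg_nonneg x hx v hv.1.le)
      rw [h1, hval_x v hv.1.le]
  -- main computation
  have hIoc : ∫ x in Ioi (0:ℝ), fJ x
      = α * a ^ α / D * ∫ x in Ioi (0:ℝ), ∫ v in Ioc (1:ℝ) (1/a), g x v := by
    rw [← MeasureTheory.integral_const_mul]
    refine setIntegral_congr_fun measurableSet_Ioi fun x hx => ?_
    rw [hfJ x hx, intervalIntegral.integral_of_le h1a.le]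
  rw [hIoc, MeasureTheory.integral_integral_swap hprod]
  have hswapval : ∫ v in Ioc (1:ℝ) (1/a), ∫ x in Ioi (0:ℝ), g x v
      = ∫ v in Ioc (1:ℝ) (1/a), (v ^ α - 1) / v := by
    refine setIntegral_congr_fun measurableSet_Ioc fun v hv => ?_
    exact hval_x v hv.1.le
  rw [hswapval, ← intervalIntegral.integral_of_le h1a.le]
  -- compute the v-integral
  have hpos : ∀ x ∈ Set.uIcc (1:ℝ) (1/a), 0 < x := by
    intro x hx
    rw [Set.uIcc_of_le h1a.le] at hx
    linarith [hx.1]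
  have hnot : (0:ℝ) ∉ Set.uIcc (1:ℝ) (1/a) := fun h => absurd (hpos 0 h) (lt_irrefl _)
  have hvint : ∫ v in (1:ℝ)..(1/a), (v ^ α - 1)/v = ((1/a) ^ α - 1)/α - Real.log (1/a) := by
    rw [intervalIntegral.integral_congr (g := fun v => v ^ (α - 1) - v⁻¹) ?_]
    · rw [intervalIntegral.integral_sub (intervalIntegral.intervalIntegrable_rpow' (by linarith))
        ((intervalIntegral.intervalIntegrable_inv (fun x hx => (hpos x hx).ne') continuousOn_id))]
      rw [integral_rpow (Or.inl (by linarith)), integral_inv hnot]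
      rw [show α - 1 + 1 = α by ring]
      simp
    · intro v hv
      have hv0 : 0 < v := hpos v hv
      simp only
      rw [Real.rpow_sub hv0, Real.rpow_one, sub_div, one_div]
  rw [hvint]
  -- algebra
  have h1 : ((1:ℝ)/a) ^ α = (a ^ α)⁻¹ := by
    rw [one_div, Real.inv_rpow ha0.le]
  have h2 : Real.log (1/a) = - Real.log a := by rw [one_div, Real.log_inv]
  have h3 : Real.log (a ^ α) = α * Real.log a := Real.log_rpow ha0 α
  rw [h1, h2]
  have hane : a ^ α ≠ 0 := ne_of_gt ht0
  have hcalc : α * a ^ α * (((a ^ α)⁻¹ - 1) / α - -Real.log a) = D := by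
    rw [hD, h3]
    field_simp
    ring
  rw [div_mul_eq_mul_div, hcalc, div_self hDpos.ne']
end

section
/- Let α < 0, β > 0, c > 0, b > 0, t > 0 and set a = e^{-bt} and λ = c Γ(−α) β^α. For every real u, λ t ( ∫_0^1 ∫_0^∞ e^{iux} · ((β e^{bvt})^{−α} x^{−α−1} e^{−β e^{bvt} x} / Γ(−α)) dx dv − 1 ) = −(c β^α Γ(1−α)/(α b)) [ ∫_β^{β/a} z^{−1−α} (z − iu)^α dz + log a ]; that is, the characteristic exponent of a compound Poisson random variable with intensity λt and jumps distributed as Gamma(−α, β e^{bUt}) with U uniform on [0,1] equals the same closed-form expression as in the infinite-activity case. Complex powers are principal-branch powers and the z-integral is a complex-valued integral over the real interval [β, β/a]. -/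
open MeasureTheory Set Complex Filter

noncomputable section

lemma aux_integrableOn_rpow_exp {s r : ℝ} (hs : -1 < s) (hr : 0 < r) :
    IntegrableOn (fun x : ℝ => x ^ s * Real.exp (-(r * x))) (Ioi 0) := by
  have h := integrableOn_rpow_mul_exp_neg_mul_rpow (p := 1) hs zero_lt_one hr
  simpa [Real.rpow_one, neg_mul] using h

lemma aux_contOn (c : ℂ) (w : ℂ) :
    ContinuousOn (fun x : ℝ => (x:ℂ) ^ c * Complex.exp (-(w * x))) (Ioi 0) := by
  intro x hx
  apply ContinuousAt.continuousWithinAt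
  exact ((Complex.continuous_ofReal.continuousAt.cpow continuousAt_const
      (Or.inl (by simpa using (mem_Ioi.mp hx))))).mul
    (Complex.continuous_exp.continuousAt.comp
      ((continuous_const.mul Complex.continuous_ofReal).neg.continuousAt))

lemma aux_norm {k : ℝ} (w : ℂ) {x : ℝ} (hx : 0 < x) :
    ‖(x:ℂ) ^ ((k:ℂ) - 1) * Complex.exp (-(w * x))‖
      = x ^ (k - 1) * Real.exp (-(w.re * x)) := by
  rw [norm_mul, Complex.norm_exp,
    Complex.norm_cpow_eq_rpow_re_of_pos hx]
  simp [Complex.mul_re]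

lemma aux_integrable {k : ℝ} (hk : 0 < k) {w : ℂ} (hw : 0 < w.re) :
    IntegrableOn (fun x : ℝ => (x:ℂ) ^ ((k:ℂ) - 1) * Complex.exp (-(w * x))) (Ioi 0) := by
  refine Integrable.mono'
    (aux_integrableOn_rpow_exp (s := k - 1) (r := w.re) (by linarith) hw)
    ((aux_contOn _ _).aestronglyMeasurable measurableSet_Ioi) ?_
  rw [ae_restrict_iff' measurableSet_Ioi]
  filter_upwards with x hx
  exact le_of_eq (aux_norm w (mem_Ioi.mp hx))

lemma laplace_rpow {k : ℝ} (hk : 0 < k) :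
    ∀ w : ℂ, 0 < w.re →
    (∫ x in Ioi (0:ℝ), (x:ℂ) ^ ((k:ℂ) - 1) * Complex.exp (-(w * x)))
      = Complex.Gamma k * w ^ (-(k:ℂ)) := by
  set U : Set ℂ := {w | 0 < w.re} with hUdef
  set F : ℂ → ℂ := fun w => ∫ x in Ioi (0:ℝ), (x:ℂ) ^ ((k:ℂ) - 1) * Complex.exp (-(w * x))
    with hF
  set G : ℂ → ℂ := fun w => Complex.Gamma k * w ^ (-(k:ℂ)) with hG
  have hUopen : IsOpen U := isOpen_lt continuous_const Complex.continuous_re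
  have hUconn : IsPreconnected U :=
    (convex_halfSpace_re_gt (0:ℝ)).isPreconnected
  -- F differentiable on U
  have hFdiff : ∀ w₀ ∈ U, HasDerivAt F
      (∫ x in Ioi (0:ℝ), -(x:ℂ) * ((x:ℂ) ^ ((k:ℂ) - 1) * Complex.exp (-(w₀ * x)))) w₀ := by
    intro w₀ hw₀
    have hw₀' : 0 < w₀.re := hw₀
    set ε : ℝ := w₀.re / 2 with hε
    have hεpos : 0 < ε := by positivity
    have key := hasDerivAt_integral_of_dominated_loc_of_deriv_le
      (μ := volume.restrict (Ioi (0:ℝ)))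
      (F := fun w (x : ℝ) => (x:ℂ) ^ ((k:ℂ) - 1) * Complex.exp (-(w * x)))
      (F' := fun w (x : ℝ) => -(x:ℂ) * ((x:ℂ) ^ ((k:ℂ) - 1) * Complex.exp (-(w * x))))
      (x₀ := w₀) (bound := fun x => x ^ k * Real.exp (-(ε * x))) (Metric.ball_mem_nhds w₀ hεpos)
      ?_ ?_ ?_ ?_ ?_ ?_
    · exact key.2
    · filter_upwards with w
      exact (aux_contOn _ _).aestronglyMeasurable measurableSet_Ioi
    · exact aux_integrable hk hw₀'
    · refine (ContinuousOn.aestronglyMeasurable ?_ measurableSet_Ioi)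
      exact (Complex.continuous_ofReal.continuousOn.neg).mul (aux_contOn _ _)
    · rw [ae_restrict_iff' measurableSet_Ioi]
      filter_upwards with x hx
      intro w hwball
      have hx' : 0 < x := mem_Ioi.mp hx
      have hre : ε ≤ w.re := by
        have h1 : |(w - w₀).re| ≤ ‖w - w₀‖ := Complex.abs_re_le_norm _
        have h2 : ‖w - w₀‖ < ε := by
          simpa [Complex.dist_eq] using Metric.mem_ball.mp hwball
        have := (abs_le.mp h1).1
        simp only [Complex.sub_re] at this
        linarith
      rw [norm_mul, aux_norm w hx']
      have h3 : ‖-(x:ℂ)‖ = x := by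
        simpa using abs_of_pos hx'
      rw [h3]
      have hxk : x * x ^ (k - 1) = x ^ k := by
        rw [show k = 1 + (k - 1) by ring, Real.rpow_add hx', Real.rpow_one]
        ring_nf
      rw [← mul_assoc, hxk]
      have : Real.exp (-(w.re * x)) ≤ Real.exp (-(ε * x)) := by
        apply Real.exp_le_exp.mpr
        nlinarith
      have hxknn : (0:ℝ) ≤ x ^ k := Real.rpow_nonneg hx'.le _
      nlinarith
    · exact aux_integrableOn_rpow_exp (by linarith) hεpos
    · rw [ae_restrict_iff' measurableSet_Ioi]
      filter_upwards with x hx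
      intro w hwball
      have h1 : HasDerivAt (fun w : ℂ => -(w * (x:ℂ))) (-(x:ℂ)) w := by
        exact (hasDerivAt_mul_const (x:ℂ)).neg
      have h2 := h1.cexp
      have h3 := h2.const_mul ((x:ℂ) ^ ((k:ℂ) - 1))
      exact h3.congr_deriv (by ring)
  have hFan : AnalyticOnNhd ℂ F U := by
    apply DifferentiableOn.analyticOnNhd _ hUopen
    intro w hw
    exact ((hFdiff w hw).differentiableAt).differentiableWithinAt
  have hGan : AnalyticOnNhd ℂ G U := by
    apply DifferentiableOn.analyticOnNhd _ hUopen
    intro w hw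
    refine DifferentiableAt.differentiableWithinAt ?_
    exact (differentiableAt_id.cpow (differentiableAt_const _) (Or.inl hw)).const_mul _
  -- equality on positive reals
  have hreal : ∀ r : ℝ, 0 < r → F (r:ℂ) = G (r:ℂ) := by
    intro r hr
    have h1 := Complex.integral_cpow_mul_exp_neg_mul_Ioi
      (a := (k:ℂ)) (r := r) (by simpa using hk) hr
    have harg : ((r:ℂ)).arg ≠ Real.pi := by
      rw [Complex.arg_ofReal_of_nonneg hr.le]
      exact fun h => Real.pi_ne_zero h.symm
    have h2 : ((1 / r : ℝ) : ℂ) ^ (k:ℂ) = (r:ℂ) ^ (-(k:ℂ)) := by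
      rw [Complex.cpow_neg]
      push_cast
      rw [one_div, Complex.inv_cpow _ _ harg]
    rw [hF, hG]
    simp only
    rw [h1]
    rw [show ((1/r : ℂ)) = ((1/r:ℝ):ℂ) by push_cast; ring] at *
    rw [h2, mul_comm]
  -- accumulation
  have hfreq : ∃ᶠ z in nhdsWithin (1:ℂ) {(1:ℂ)}ᶜ, F z = G z := by
    have htend : Tendsto (fun n : ℕ => ((1 + 1/(n+1) : ℝ) : ℂ)) atTop
        (nhdsWithin (1:ℂ) {(1:ℂ)}ᶜ) := by
      rw [tendsto_nhdsWithin_iff]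
      constructor
      · have h0 : Tendsto (fun n : ℕ => (1 + 1/(n+1) : ℝ)) atTop (nhds 1) := by
          have := tendsto_one_div_add_atTop_nhds_zero_nat (𝕜 := ℝ)
          simpa using tendsto_const_nhds.add this
        have := (Complex.continuous_ofReal.tendsto (1:ℝ)).comp h0
        simpa [Function.comp_def] using this
      · filter_upwards with n
        simp only [mem_compl_iff, mem_singleton_iff]
        intro h
        have : (1 + 1/((n:ℝ)+1)) = 1 := by exact_mod_cast h
        have hn : (0:ℝ) < 1/((n:ℝ)+1) := by positivity
        linarith
    refine htend.frequently (Frequently.of_forall fun n => ?_)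
    exact hreal _ (by positivity)
  have hEq : EqOn F G U :=
    hFan.eqOn_of_preconnected_of_frequently_eq hGan hUconn
      (show (1:ℂ) ∈ U by simp [hUdef]) hfreq
  intro w hw
  exact hEq hw

lemma gamma_charfun {k r : ℝ} (hk : 0 < k) (hr : 0 < r) (u : ℝ) :
    (∫ x in Ioi (0:ℝ), Complex.exp (Complex.I * u * x) *
        ((r ^ k * x ^ (k - 1) * Real.exp (-(r * x)) / Real.Gamma k : ℝ) : ℂ))
      = (r : ℂ) ^ (k : ℂ) * ((r : ℂ) - Complex.I * u) ^ (-(k:ℂ)) := by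
  set w : ℂ := (r:ℂ) - Complex.I * u with hw
  have hwre : 0 < w.re := by
    simp [hw, Complex.sub_re, Complex.mul_re, hr]
  have key := laplace_rpow hk w hwre
  have hcongr : EqOn
      (fun x : ℝ => Complex.exp (Complex.I * u * x) *
        ((r ^ k * x ^ (k - 1) * Real.exp (-(r * x)) / Real.Gamma k : ℝ) : ℂ))
      (fun x : ℝ => ((r ^ k / Real.Gamma k : ℝ) : ℂ) *
        ((x:ℂ) ^ ((k:ℂ) - 1) * Complex.exp (-(w * x)))) (Ioi 0) := by
    intro x hx
    have hx' : 0 < x := mem_Ioi.mp hx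
    simp only
    have hxp : ((x ^ (k-1) : ℝ) : ℂ) = (x:ℂ) ^ ((k:ℂ) - 1) := by
      rw [Complex.ofReal_cpow hx'.le]
      push_cast
      ring_nf
    have hexp : Complex.exp (Complex.I * u * x) * ((Real.exp (-(r * x)) : ℝ) : ℂ)
        = Complex.exp (-(w * x)) := by
      rw [Complex.ofReal_exp, ← Complex.exp_add]
      congr 1
      push_cast [hw]
      ring
    push_cast
    rw [hxp]
    rw [← hexp]
    push_cast
    ring
  rw [setIntegral_congr_fun measurableSet_Ioi hcongr]
  rw [integral_const_mul, key, Complex.Gamma_ofReal]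
  have hΓ : Real.Gamma k ≠ 0 := (Real.Gamma_pos_of_pos hk).ne'
  have hrk : ((r ^ k : ℝ) : ℂ) = (r:ℂ) ^ (k:ℂ) := Complex.ofReal_cpow hr.le k
  have hΓ' : ((Real.Gamma k : ℝ) : ℂ) ≠ 0 := by exact_mod_cast hΓ
  push_cast [hrk]
  field_simp

/-- For `α < 0`, `β, c, b, t > 0`, `a = e^{-bt}` and
`λ = c Γ(−α) β^α`, the characteristic exponent of a compound Poisson random variable
with intensity `λt` and jumps `Gamma(−α, β e^{bUt})`, `U ∼ Uniform(0,1)`, equals the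
same closed form as in the infinite-activity case: for every real `u`,
`λ t (∫_0^1 ∫_0^∞ e^{iux} ((β e^{bvt})^{−α} x^{−α−1} e^{−β e^{bvt} x}/Γ(−α)) dx dv − 1)
  = −(c β^α Γ(1−α)/(α b)) [ ∫_β^{β/a} z^{−1−α} (z − iu)^α dz + log a ]`,
with principal complex powers, the `z`-integral taken over the real interval `[β, β/a]`. -/
theorem ou_cts_finite_activity_charexp
    (α β c b t : ℝ) (hα : α < 0)
    (hβ : 0 < β) (hc : 0 < c) (hb : 0 < b) (ht : 0 < t)
    (a : ℝ) (ha : a = Real.exp (-(b * t)))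
    (lam : ℝ) (hlam : lam = c * Real.Gamma (-α) * β ^ α)
    (u : ℝ) :
    (lam * t : ℂ) *
        ((∫ v in (0 : ℝ)..1, ∫ x in Ioi (0 : ℝ),
            Complex.exp (Complex.I * u * x) *
              (((β * Real.exp (b * v * t)) ^ (-α) * x ^ (-α - 1) *
                  Real.exp (-(β * Real.exp (b * v * t) * x)) / Real.Gamma (-α) : ℝ) : ℂ)) - 1) =
      -((c * β ^ α * Real.Gamma (1 - α) / (α * b) : ℝ) : ℂ) *
        ((∫ z in β..(β / a),
            (z : ℂ) ^ (-1 - α : ℂ) * ((z : ℂ) - Complex.I * u) ^ (α : ℂ)) +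
          (Real.log a : ℂ)) := by
  have hk : 0 < -α := by linarith
  set f : ℝ → ℝ := fun v => β * Real.exp (b * v * t) with hfdef
  have hfpos : ∀ v, 0 < f v := fun v => by positivity
  -- inner integral evaluation
  have hinner : ∀ v : ℝ,
      (∫ x in Ioi (0:ℝ), Complex.exp (Complex.I * u * x) *
          (((β * Real.exp (b * v * t)) ^ (-α) * x ^ (-α - 1) *
              Real.exp (-(β * Real.exp (b * v * t) * x)) / Real.Gamma (-α) : ℝ) : ℂ))
        = ((f v : ℝ):ℂ) ^ ((-α : ℝ):ℂ) * (((f v : ℝ):ℂ) - Complex.I * u) ^ (-((-α:ℝ):ℂ)) :=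
    fun v => gamma_charfun hk (hfpos v) u
  simp only [hinner]
  set C : ℝ → ℂ := fun v =>
    ((f v : ℝ):ℂ) ^ ((-α : ℝ):ℂ) * (((f v : ℝ):ℂ) - Complex.I * u) ^ (-((-α:ℝ):ℂ)) with hC
  -- substitution in the z-integral
  have hfa : β / a = f 1 := by
    rw [ha, hfdef]
    simp only [mul_one]
    rw [Real.exp_neg]
    field_simp
  have hf0 : f 0 = β := by simp [hfdef]
  set g : ℝ → ℂ := fun z => (z : ℂ) ^ (-1 - α : ℂ) * ((z : ℂ) - Complex.I * u) ^ (α : ℂ)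
    with hg
  set f' : ℝ → ℝ := fun v => β * (Real.exp (b * v * t) * (b * t)) with hf'
  have hder : ∀ v : ℝ, HasDerivAt f (f' v) v := by
    intro v
    have h1 : HasDerivAt (fun v : ℝ => b * v * t) (b * t) v := by
      simpa using ((hasDerivAt_id v).const_mul b).mul_const t
    simpa [hf', hfdef, mul_comm, mul_assoc] using (h1.exp.const_mul β)
  have hgc : ContinuousOn g (f '' (Set.uIcc (0:ℝ) 1)) := by
    have hsub : f '' (Set.uIcc (0:ℝ) 1) ⊆ Ioi 0 := by
      rintro z ⟨v, _, rfl⟩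
      exact hfpos v
    refine ContinuousOn.mono ?_ hsub
    intro z hz
    have hz' : 0 < z := mem_Ioi.mp hz
    apply ContinuousAt.continuousWithinAt
    refine ContinuousAt.mul ?_ ?_
    · exact Complex.continuous_ofReal.continuousAt.cpow continuousAt_const
        (Or.inl (by simpa using hz'))
    · exact ((Complex.continuous_ofReal.continuousAt.sub continuousAt_const)).cpow
        continuousAt_const (Or.inl (by simpa using hz'))
  have hsubst : (∫ z in β..(β / a), g z) = ∫ v in (0:ℝ)..1, f' v • g (f v) := by
    rw [hfa, ← hf0]
    symm
    have hmain := intervalIntegral.integral_comp_smul_deriv'' (a := (0:ℝ)) (b := 1)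
      (f := f) (f' := f') (g := g)
      (Continuous.continuousOn (by continuity))
      (fun x _ => (hder x).hasDerivWithinAt)
      (Continuous.continuousOn (by continuity)) hgc
    simpa [Function.comp_def] using hmain
  have hpt : ∀ v : ℝ, f' v • g (f v) = ((b * t : ℝ):ℂ) * C v := by
    intro v
    have hfv := hfpos v
    have hne : ((f v : ℝ):ℂ) ≠ 0 := by
      exact_mod_cast hfv.ne'
    have hrel : ((f' v : ℝ):ℂ) = ((f v : ℝ):ℂ) * ((b * t : ℝ):ℂ) := by
      simp only [hf', hfdef]
      push_cast
      ring
    rw [hg, hC]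
    simp only
    rw [real_smul, hrel]
    have he2 : (-(((-α:ℝ)):ℂ)) = (α:ℂ) := by push_cast; ring
    have he1 : ((((-α:ℝ))):ℂ) = -(α:ℂ) := by push_cast; ring
    rw [he2, he1]
    have hcp : ((f v : ℝ):ℂ) ^ (-1 - (α:ℂ)) =
        ((f v:ℝ):ℂ) ^ (-(1:ℂ)) * ((f v:ℝ):ℂ) ^ (-(α:ℂ)) := by
      rw [show (-1 - (α:ℂ)) = (-(1:ℂ)) + (-(α:ℂ)) by ring, Complex.cpow_add _ _ hne]
    rw [hcp, Complex.cpow_neg_one]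
    field_simp
  have hsubst2 : (∫ z in β..(β / a), g z) = ((b * t : ℝ):ℂ) * ∫ v in (0:ℝ)..1, C v := by
    rw [hsubst]
    simp only [hpt]
    rw [intervalIntegral.integral_const_mul]
  have hloga : (Real.log a : ℂ) = -((b * t : ℝ):ℂ) := by
    rw [ha, Real.log_exp]
    push_cast
    ring
  rw [show (∫ z in β..(β / a), (z : ℂ) ^ (-1 - α : ℂ) * ((z : ℂ) - Complex.I * u) ^ (α : ℂ))
      = ∫ z in β..(β / a), g z from rfl, hsubst2, hloga]
  -- final algebra
  have hΓ : Real.Gamma (1 - α) = -α * Real.Gamma (-α) := by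
    rw [show (1:ℝ) - α = -α + 1 by ring]
    exact Real.Gamma_add_one (by linarith)
  set X : ℂ := ∫ v in (0:ℝ)..1, C v with hX
  set K : ℝ := c * β ^ α * Real.Gamma (1 - α) / (α * b) with hKdef
  have hKb : (K:ℂ) * ((b:ℂ) * t) = -((lam:ℂ) * t) := by
    have hr : K * (b * t) = -(lam * t) := by
      rw [hKdef, hΓ, hlam]
      field_simp [ne_of_lt hα, hb.ne']
    exact_mod_cast hr
  push_cast at hKb ⊢
  linear_combination (X - 1) * hKb
end
end

section
/- Let 0 < α < 1 and let u, β₁, β₂ be real numbers with 0 < β₁ ≤ β₂ < u. Then ∫_{β₁}^{β₂} z^{−1−α} (z − iu)^α dz = −(1/α) [ (u/(iβ₂))^α · ₂F₁(−α, −α; 1−α; −iβ₂/u) − (u/(iβ₁))^α · ₂F₁(−α, −α; 1−α; −iβ₁/u) ], where the left side is a complex-valued integral over the real interval [β₁, β₂], all complex powers are principal-branch powers, and both hypergeometric series converge since |βⱼ/u| < 1. -/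
open MeasureTheory

/-- The Gauss (ordinary) hypergeometric function `₂F₁(a, b; c; x)`, defined by the series
`Σ_{n≥0} ((a)_n (b)_n / (c)_n) x^n / n!` (with `(a)_n` the ascending Pochhammer symbol),
absolutely convergent for `|x| < 1`. -/
noncomputable def hyp2F1 (a b c x : ℂ) : ℂ :=
  ∑' n : ℕ,
    (ascPochhammer ℂ n).eval a * (ascPochhammer ℂ n).eval b /
      (ascPochhammer ℂ n).eval c * x ^ n / (n.factorial : ℂ)

open Complex

set_option linter.deprecated false


lemma mul_cpow_of_arg {x y : ℂ} (hx : x ≠ 0) (hy : y ≠ 0)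
    (h : arg x + arg y ∈ Set.Ioc (-Real.pi) Real.pi) (s : ℂ) :
    (x * y) ^ s = x ^ s * y ^ s := by
  rw [cpow_def_of_ne_zero (mul_ne_zero hx hy), cpow_def_of_ne_zero hx,
    cpow_def_of_ne_zero hy, ← Complex.exp_add, ← add_mul, Complex.log_mul hx hy h]

lemma cpow_mul_ofReal_pos {x : ℂ} (hx : x ≠ 0) {r : ℝ} (hr : 0 < r) (s : ℂ) :
    (x * (r : ℂ)) ^ s = x ^ s * (r : ℂ) ^ s := by
  refine mul_cpow_of_arg hx (by exact_mod_cast hr.ne') ?_ s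
  rw [arg_ofReal_of_nonneg hr.le, add_zero]
  exact ⟨neg_pi_lt_arg x, arg_le_pi x⟩

lemma poch_id (a : ℂ) (n : ℕ) :
    a * (ascPochhammer ℂ n).eval (1 - a) = (a - n) * (ascPochhammer ℂ n).eval (-a) := by
  induction n with
  | zero => simp
  | succ n ih =>
    simp only [ascPochhammer_succ_right, Polynomial.eval_mul, Polynomial.eval_add,
      Polynomial.eval_X, Polynomial.eval_natCast, Nat.cast_succ]
    linear_combination (1 - a + (n : ℂ)) * ih

lemma poch_ne_zero {α : ℝ} (hα1 : α < 1) (n : ℕ) :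
    (ascPochhammer ℂ n).eval (1 - (α : ℂ)) ≠ 0 := by
  induction n with
  | zero => simp
  | succ n ih =>
    simp only [ascPochhammer_succ_right, Polynomial.eval_mul, Polynomial.eval_add,
      Polynomial.eval_X, Polynomial.eval_natCast]
    refine mul_ne_zero ih (fun h => ?_)
    have := congrArg Complex.re h
    simp only [Complex.add_re, Complex.sub_re, Complex.one_re, Complex.ofReal_re,
      Complex.natCast_re, Complex.zero_re] at this
    nlinarith [Nat.cast_nonneg (α := ℝ) n]

lemma poch_norm_le {α : ℝ} (hα0 : 0 < α) (hα1 : α < 1) (n : ℕ) :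
    ‖(ascPochhammer ℂ n).eval (-(α : ℂ))‖ ≤ n.factorial := by
  induction n with
  | zero => simp
  | succ n ih =>
    simp only [ascPochhammer_succ_right, Polynomial.eval_mul, Polynomial.eval_add,
      Polynomial.eval_X, Polynomial.eval_natCast, norm_mul]
    have h1 : (-(α : ℂ) + n) = ((n - α : ℝ) : ℂ) := by push_cast; ring
    have h2 : ‖(-(α : ℂ) + n)‖ ≤ (n + 1 : ℝ) := by
      rw [h1, Complex.norm_real, Real.norm_eq_abs, abs_le]
      constructor <;> nlinarith [Nat.cast_nonneg (α := ℝ) n]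
    calc ‖(ascPochhammer ℂ n).eval (-(α : ℂ))‖ * ‖(-(α : ℂ) + n)‖
        ≤ (n.factorial : ℝ) * (n + 1 : ℝ) := by
          exact mul_le_mul ih h2 (norm_nonneg _) (Nat.cast_nonneg _)
      _ = ((n + 1).factorial : ℝ) := by rw [Nat.factorial_succ]; push_cast; ring

lemma hasDerivAt_one_sub_cpow (s : ℂ) {z : ℂ} (hz : ‖z‖ < 1) :
    HasDerivAt (fun z : ℂ => (1 - z) ^ s) (-(s * (1 - z) ^ (s - 1))) z := by
  have h1 : HasDerivAt (fun z : ℂ => 1 - z) (-1) z := (hasDerivAt_id z).const_sub 1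
  have hre : 0 < (1 - z).re := by
    have h2 : z.re < 1 := lt_of_le_of_lt (le_trans (le_abs_self _) (Complex.abs_re_le_norm z))
      hz
    simp only [Complex.sub_re, Complex.one_re]
    linarith
  simpa using h1.cpow_const (Or.inl hre)

lemma iteratedDeriv_one_sub_cpow (a : ℂ) (n : ℕ) :
    ∀ z ∈ Metric.ball (0 : ℂ) 1,
      iteratedDeriv n (fun z : ℂ => (1 - z) ^ a) z =
        (ascPochhammer ℂ n).eval (-a) * (1 - z) ^ (a - n) := by
  induction n with
  | zero => intro z _; simp
  | succ n ih =>
    intro z hz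
    rw [iteratedDeriv_succ]
    have hev : iteratedDeriv n (fun z : ℂ => (1 - z) ^ a) =ᶠ[nhds z]
        fun z => (ascPochhammer ℂ n).eval (-a) * (1 - z) ^ (a - n) :=
      Filter.eventuallyEq_of_mem (Metric.isOpen_ball.mem_nhds hz) ih
    rw [hev.deriv_eq]
    have hz' : ‖z‖ < 1 := by simpa [dist_zero_right] using hz
    rw [((hasDerivAt_one_sub_cpow (a - n) hz').const_mul
      ((ascPochhammer ℂ n).eval (-a))).deriv]
    simp only [ascPochhammer_succ_right, Polynomial.eval_mul, Polynomial.eval_add,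
      Polynomial.eval_X, Polynomial.eval_natCast]
    have : a - (n : ℂ) - 1 = a - (n + 1 : ℕ) := by push_cast; ring
    rw [← this]; ring

lemma hasSum_binomial (a : ℂ) {w : ℂ} (hw : ‖w‖ < 1) :
    HasSum (fun n : ℕ => (ascPochhammer ℂ n).eval (-a) / n.factorial * w ^ n)
      ((1 - w) ^ a) := by
  set f : ℂ → ℂ := fun z => (1 - z) ^ a with hf
  set r : NNReal := ⟨(‖w‖ + 1) / 2, by positivity⟩ with hrdef
  have hr0 : 0 < r := by
    rw [← NNReal.coe_lt_coe]
    exact (show (0:ℝ) < (‖w‖ + 1) / 2 by positivity)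
  have hwr : ‖w‖ < (r : ℝ) := by show ‖w‖ < (‖w‖ + 1) / 2; linarith
  have hr1 : (r : ℝ) < 1 := by show (‖w‖ + 1) / 2 < 1; linarith
  have hdiff : DifferentiableOn ℂ f (Metric.closedBall 0 r) := by
    intro z hz
    have hz1 : ‖z‖ < 1 := by
      have : ‖z‖ ≤ (r : ℝ) := by simpa [dist_zero_right] using hz
      linarith
    exact ((hasDerivAt_one_sub_cpow a hz1).differentiableAt).differentiableWithinAt
  have hball := hdiff.hasFPowerSeriesOnBall hr0
  have hmem : w ∈ Metric.eball (0 : ℂ) (r : ENNReal) := by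
    rw [Metric.mem_eball, edist_zero_right]
    exact_mod_cast hwr
  have hsum := hball.hasSum_iteratedFDeriv hmem
  rw [zero_add] at hsum
  have key : ∀ n : ℕ, ((n.factorial : ℂ))⁻¹ • iteratedFDeriv ℂ n f 0 (fun _ => w)
      = (ascPochhammer ℂ n).eval (-a) / n.factorial * w ^ n := by
    intro n
    rw [iteratedFDeriv_apply_eq_iteratedDeriv_mul_prod,
      iteratedDeriv_one_sub_cpow a n 0 (by simp)]
    simp only [Finset.prod_const, Finset.card_univ, Fintype.card_fin, smul_eq_mul,
      sub_zero, Complex.one_cpow, mul_one]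
    ring
  have : (fun n : ℕ => (ascPochhammer ℂ n).eval (-a) / n.factorial * w ^ n)
      = fun n => ((n.factorial : ℂ))⁻¹ • iteratedFDeriv ℂ n f 0 (fun _ => w) :=
    funext fun n => (key n).symm
  rw [this]
  exact hsum
lemma nsubA_ne_zero {α : ℝ} (hα0 : 0 < α) (hα1 : α < 1) (n : ℕ) : (n : ℂ) - (α : ℂ) ≠ 0 := by
  intro h
  have hre := congrArg Complex.re h
  simp only [Complex.sub_re, Complex.natCast_re, Complex.ofReal_re, Complex.zero_re] at hre
  rcases n with _ | n
  · simp at hre; linarith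
  · have : (1 : ℝ) ≤ (n + 1 : ℕ) := by exact_mod_cast Nat.one_le_iff_ne_zero.mpr (by simp)
    nlinarith

lemma norm_nsubA {α : ℝ} (n : ℕ) : ‖(n : ℂ) - (α : ℂ)‖ = |(n : ℝ) - α| := by
  have : (n : ℂ) - (α : ℂ) = (((n : ℝ) - α : ℝ) : ℂ) := by push_cast; ring
  rw [this, Complex.norm_real, Real.norm_eq_abs]

lemma inv_norm_nsubA_le {α : ℝ} (hα0 : 0 < α) (hα1 : α < 1) (n : ℕ) :
    ‖(n : ℂ) - (α : ℂ)‖⁻¹ ≤ max α⁻¹ (1 - α)⁻¹ := by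
  rw [norm_nsubA]
  rcases n with _ | n
  · simp only [Nat.cast_zero, zero_sub, abs_neg, abs_of_pos hα0]
    exact le_max_left _ _
  · have h1 : (1 : ℝ) - α ≤ |(n + 1 : ℕ) - α| := by
      rw [abs_of_pos (by push_cast; nlinarith [Nat.cast_nonneg (α := ℝ) n])]
      push_cast; nlinarith [Nat.cast_nonneg (α := ℝ) n]
    refine le_trans ?_ (le_max_right _ _)
    exact inv_anti₀ (by linarith) h1


lemma tsum_h_eq {α u β : ℝ} (hα0 : 0 < α) (hα1 : α < 1) (hu0 : 0 < u) (hβ0 : 0 < β) :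
    (∑' n : ℕ, (-(Complex.I * u)) ^ (α : ℂ) *
        ((ascPochhammer ℂ n).eval (-(α : ℂ)) / n.factorial) *
        ((Complex.I * u)⁻¹) ^ n * (β : ℂ) ^ ((n : ℂ) - α) / ((n : ℂ) - α))
      = -(1 / (α : ℂ)) * (((u : ℂ) / (Complex.I * β)) ^ (α : ℂ) *
          hyp2F1 (-α) (-α) (1 - α) (-(Complex.I * β) / u)) := by
  have hβC : ((β : ℝ) : ℂ) ≠ 0 := by exact_mod_cast hβ0.ne'
  have hnIu : -(Complex.I * (u : ℂ)) ≠ 0 := by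
    simp [Complex.I_ne_zero, Complex.ext_iff]
    exact_mod_cast hu0.ne'
  have hA : (α : ℂ) ≠ 0 := by exact_mod_cast hα0.ne'
  -- (u/(Iβ))^α = D * β^(-α)
  have hbase : (u : ℂ) / (Complex.I * β) = (-(Complex.I * u)) * ((β⁻¹ : ℝ) : ℂ) := by
    push_cast
    field_simp
    rw [Complex.I_sq]
    ring
  have hcu : ((u : ℂ) / (Complex.I * β)) ^ (α : ℂ)
      = (-(Complex.I * u)) ^ (α : ℂ) * ((β : ℂ)) ^ (-(α : ℂ)) := by
    rw [hbase, cpow_mul_ofReal_pos hnIu (inv_pos.mpr hβ0)]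
    congr 1
    rw [Complex.ofReal_inv, Complex.inv_cpow _ _
      (by rw [Complex.arg_ofReal_of_nonneg hβ0.le]; exact Real.pi_ne_zero.symm),
      ← Complex.cpow_neg]
  simp only [hyp2F1]
  rw [hcu, ← tsum_mul_left, ← tsum_mul_left]
  refine tsum_congr fun n => ?_
  have hQ := poch_ne_zero hα1 n
  have hnA := nsubA_ne_zero hα0 hα1 n
  have hfac : ((n.factorial : ℕ) : ℂ) ≠ 0 := Nat.cast_ne_zero.mpr n.factorial_ne_zero
  have hpoch := poch_id (α : ℂ) n
  -- exponent split
  have hβexp : (β : ℂ) ^ ((n : ℂ) - α) = (β : ℂ) ^ (n : ℕ) * (β : ℂ) ^ (-(α : ℂ)) := by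
    rw [sub_eq_add_neg, Complex.cpow_add _ _ hβC, Complex.cpow_natCast]
  have hxn : (-(Complex.I * β) / u) ^ n = (β : ℂ) ^ n * ((Complex.I * u)⁻¹) ^ n := by
    rw [← mul_pow, mul_inv, Complex.inv_I]
    congr 1
    rw [div_eq_mul_inv]
    ring
  rw [hβexp, hxn]
  have key : (ascPochhammer ℂ n).eval (-(α : ℂ)) / ((n : ℂ) - α)
      = -(1 / (α : ℂ)) * ((ascPochhammer ℂ n).eval (-(α : ℂ)) *
          (ascPochhammer ℂ n).eval (-(α : ℂ)) / (ascPochhammer ℂ n).eval (1 - (α : ℂ))) := by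
    field_simp
    linear_combination (ascPochhammer ℂ n).eval (-(α : ℂ)) * hpoch
  calc (-(Complex.I * u)) ^ (α : ℂ) * ((ascPochhammer ℂ n).eval (-(α : ℂ)) / n.factorial) *
        ((Complex.I * u)⁻¹) ^ n * ((β : ℂ) ^ (n : ℕ) * (β : ℂ) ^ (-(α : ℂ))) / ((n : ℂ) - α)
      = (-(Complex.I * u)) ^ (α : ℂ) * ((Complex.I * u)⁻¹) ^ n * (β : ℂ) ^ (n : ℕ) *
          (β : ℂ) ^ (-(α : ℂ)) * ((ascPochhammer ℂ n).eval (-(α : ℂ)) / ((n : ℂ) - α))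
          / n.factorial := by ring
    _ = _ := by rw [key]; ring

lemma hasSum_g {α u : ℝ} (hu0 : 0 < u) {z : ℝ} (hz0 : 0 < z) (hzu : z < u) :
    HasSum (fun n : ℕ => (-(Complex.I * u)) ^ (α : ℂ) *
        ((ascPochhammer ℂ n).eval (-(α : ℂ)) / n.factorial) *
        ((Complex.I * u)⁻¹) ^ n * (z : ℂ) ^ (-1 - (α : ℂ) + n))
      ((z : ℂ) ^ (-1 - (α : ℂ)) * ((z : ℂ) - Complex.I * u) ^ (α : ℂ)) := by
  have hIu : Complex.I * (u : ℂ) ≠ 0 := by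
    refine mul_ne_zero Complex.I_ne_zero ?_
    exact_mod_cast hu0.ne'
  have hnIu : -(Complex.I * (u : ℂ)) ≠ 0 := neg_ne_zero.mpr hIu
  have hzC : ((z : ℝ) : ℂ) ≠ 0 := by exact_mod_cast hz0.ne'
  set w : ℂ := (z : ℂ) * (Complex.I * u)⁻¹ with hwdef
  have hw' : w = -(z / u) * Complex.I := by
    rw [hwdef, mul_inv, Complex.inv_I]
    push_cast
    ring
  have hw : ‖w‖ < 1 := by
    rw [hw', show ((z : ℂ) / (u : ℂ)) = ((z / u : ℝ) : ℂ) by push_cast; ring]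
    simp only [norm_mul, Complex.norm_I, mul_one, norm_neg,
      Complex.norm_real, Real.norm_eq_abs]
    rw [abs_of_pos (by positivity), div_lt_one hu0]
    exact hzu
  have hbin := hasSum_binomial (α : ℂ) hw
  have hmul := hbin.mul_left ((z : ℂ) ^ (-1 - (α : ℂ)) * (-(Complex.I * u)) ^ (α : ℂ))
  have hfac : (z : ℂ) - Complex.I * u = (-(Complex.I * u)) * (1 - w) := by
    rw [hwdef]
    linear_combination (-(z:ℂ)) * (mul_inv_cancel₀ hIu)
  have hDw : (-(Complex.I * u)) ^ (α : ℂ) * (1 - w) ^ (α : ℂ)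
      = ((z : ℂ) - Complex.I * u) ^ (α : ℂ) := by
    rw [hfac]
    refine (mul_cpow_of_arg hnIu ?_ ?_ _).symm
    · intro h
      have := congrArg Complex.re h
      rw [hw'] at this
      simp [Complex.sub_re] at this
    · have harg1 : Complex.arg (-(Complex.I * u)) = -(Real.pi / 2) := by
        rw [show -(Complex.I * (u : ℂ)) = (u : ℂ) * -Complex.I by ring,
          Complex.arg_real_mul _ hu0, Complex.arg_neg_I]
      have him : (1 - w).im = z / u := by rw [hw']; simp
      have hre : (1 - w).re = 1 := by rw [hw']; simp
      have harg2a : 0 ≤ Complex.arg (1 - w) := by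
        rw [Complex.arg_nonneg_iff, him]; positivity
      have harg2b : |Complex.arg (1 - w)| < Real.pi / 2 := by
        rw [Complex.abs_arg_lt_pi_div_two_iff, hre]
        exact Or.inl one_pos
      rw [harg1]
      have := abs_lt.mp harg2b
      constructor
      · linarith [Real.pi_pos]
      · linarith [Real.pi_pos]
  have heq : (fun n : ℕ => (-(Complex.I * u)) ^ (α : ℂ) *
        ((ascPochhammer ℂ n).eval (-(α : ℂ)) / n.factorial) *
        ((Complex.I * u)⁻¹) ^ n * (z : ℂ) ^ (-1 - (α : ℂ) + n))
      = fun n : ℕ => ((z : ℂ) ^ (-1 - (α : ℂ)) * (-(Complex.I * u)) ^ (α : ℂ)) *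
        ((ascPochhammer ℂ n).eval (-(α : ℂ)) / n.factorial * w ^ n) := by
    funext n
    rw [hwdef, mul_pow, Complex.cpow_add _ _ hzC, Complex.cpow_natCast]
    ring
  rw [heq, show (z : ℂ) ^ (-1 - (α : ℂ)) * ((z : ℂ) - Complex.I * u) ^ (α : ℂ)
      = ((z : ℂ) ^ (-1 - (α : ℂ)) * (-(Complex.I * u)) ^ (α : ℂ)) * (1 - w) ^ (α : ℂ) by
    rw [mul_assoc, hDw]]
  exact hmul

lemma norm_term_eq {α u : ℝ} (hα0 : 0 < α) (hα1 : α < 1) (hu0 : 0 < u) {z : ℝ} (hz0 : 0 < z)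
    (n : ℕ) (e : ℂ) :
    ‖(-(Complex.I * u)) ^ (α : ℂ) *
        ((ascPochhammer ℂ n).eval (-(α : ℂ)) / n.factorial) *
        ((Complex.I * u)⁻¹) ^ n * (z : ℂ) ^ e‖
      = u ^ α * (‖(ascPochhammer ℂ n).eval (-(α : ℂ))‖ / n.factorial) * (u⁻¹) ^ n
          * z ^ e.re := by
  have hnIu : -(Complex.I * (u : ℂ)) ≠ 0 := by
    refine neg_ne_zero.mpr (mul_ne_zero Complex.I_ne_zero ?_)
    exact_mod_cast hu0.ne'
  have h1 : ‖(-(Complex.I * (u : ℂ))) ^ (α : ℂ)‖ = u ^ α := by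
    rw [Complex.norm_cpow_of_ne_zero hnIu]
    simp only [Complex.ofReal_im, Complex.ofReal_re, norm_neg, norm_mul, Complex.norm_I,
      Complex.norm_real, Real.norm_eq_abs, one_mul, mul_zero, Real.exp_zero, div_one]
    rw [abs_of_pos hu0]
  have h2 : ‖((Complex.I * (u : ℂ))⁻¹) ^ n‖ = (u⁻¹) ^ n := by
    rw [norm_pow, norm_inv]
    simp only [norm_mul, Complex.norm_I, Complex.norm_real, Real.norm_eq_abs, one_mul]
    rw [abs_of_pos hu0]
  have h3 : ‖(z : ℂ) ^ e‖ = z ^ e.re := by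
    rw [Complex.norm_cpow_eq_rpow_re_of_pos hz0]
  rw [norm_mul, norm_mul, norm_mul, h1, h2, h3, norm_div]
  norm_num

lemma norm_poch_div_fac_le {α : ℝ} (hα0 : 0 < α) (hα1 : α < 1) (n : ℕ) :
    ‖(ascPochhammer ℂ n).eval (-(α : ℂ))‖ / (n.factorial : ℝ) ≤ 1 := by
  rw [div_le_one (by positivity)]
  exact poch_norm_le hα0 hα1 n

lemma summable_h {α u β : ℝ} (hα0 : 0 < α) (hα1 : α < 1) (hβ0 : 0 < β) (hβu : β < u) :
    Summable (fun n : ℕ => (-(Complex.I * u)) ^ (α : ℂ) *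
        ((ascPochhammer ℂ n).eval (-(α : ℂ)) / n.factorial) *
        ((Complex.I * u)⁻¹) ^ n * (β : ℂ) ^ ((n : ℂ) - α) / ((n : ℂ) - α)) := by
  have hu0 : 0 < u := lt_trans hβ0 hβu
  set M : ℝ := max α⁻¹ (1 - α)⁻¹ with hM
  refine Summable.of_norm_bounded
    (g := fun n => (u ^ α * β ^ (-α) * M) * (β / u) ^ n) ?_ ?_
  · exact (summable_geometric_of_lt_one (by positivity) (by rwa [div_lt_one hu0])).mul_left _
  · intro n
    rw [norm_div, norm_term_eq hα0 hα1 hu0 hβ0 n _]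
    have hre : ((n : ℂ) - (α : ℂ)).re = (n : ℝ) - α := by
      simp [Complex.sub_re]
    rw [hre, Real.rpow_sub hβ0, Real.rpow_natCast]
    have hβα : (0:ℝ) < β ^ α := Real.rpow_pos_of_pos hβ0 _
    have step1 : u ^ α * (‖(ascPochhammer ℂ n).eval (-(α : ℂ))‖ / ↑n.factorial) * u⁻¹ ^ n *
          (β ^ n / β ^ α) / ‖(n : ℂ) - (α : ℂ)‖
        = (u ^ α * (β ^ α)⁻¹) * (‖(ascPochhammer ℂ n).eval (-(α : ℂ))‖ / ↑n.factorial)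
          * ‖(n : ℂ) - (α : ℂ)‖⁻¹ * (β / u) ^ n := by
      rw [div_pow, div_eq_mul_inv (β ^ n) (u ^ n), ← inv_pow]
      ring
    rw [step1]
    have hfin : (0:ℝ) ≤ (β / u) ^ n := by positivity
    have h1 := norm_poch_div_fac_le hα0 hα1 n
    have h2 := inv_norm_nsubA_le hα0 hα1 n
    have hM0 : 0 < M := lt_max_iff.mpr (Or.inl (by positivity))
    have hβinv : β ^ (-α) = (β ^ α)⁻¹ := by rw [Real.rpow_neg hβ0.le]
    rw [hβinv]
    have : u ^ α * (β ^ α)⁻¹ * (‖(ascPochhammer ℂ n).eval (-(α : ℂ))‖ / ↑n.factorial) *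
          ‖(n : ℂ) - (α : ℂ)‖⁻¹ ≤ u ^ α * (β ^ α)⁻¹ * 1 * M := by
      have hpos : (0:ℝ) ≤ u ^ α * (β ^ α)⁻¹ := by positivity
      have := mul_le_mul (mul_le_mul_of_nonneg_left h1 hpos) h2 (by positivity)
        (by positivity)
      linarith [this]
    calc u ^ α * (β ^ α)⁻¹ * (‖(ascPochhammer ℂ n).eval (-(α : ℂ))‖ / ↑n.factorial) *
          ‖(n : ℂ) - (α : ℂ)‖⁻¹ * (β / u) ^ n
        ≤ (u ^ α * (β ^ α)⁻¹ * 1 * M) * (β / u) ^ n := mul_le_mul_of_nonneg_right this hfin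
      _ = u ^ α * (β ^ α)⁻¹ * M * (β / u) ^ n := by ring

/-- For `0 < α < 1` and reals `0 < β₁ ≤ β₂ < u`,
`∫_{β₁}^{β₂} z^{−1−α} (z − iu)^α dz
  = −(1/α) [ (u/(iβ₂))^α ₂F₁(−α, −α; 1−α; −iβ₂/u)
             − (u/(iβ₁))^α ₂F₁(−α, −α; 1−α; −iβ₁/u) ]`,
the left side being a complex-valued integral over the real interval `[β₁, β₂]`, all
complex powers principal, the hypergeometric series converging since `|βⱼ/u| < 1`. -/
theorem integral_I_hypergeometric
    (α β₁ β₂ u : ℝ) (hα0 : 0 < α) (hα1 : α < 1)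
    (hβ₁ : 0 < β₁) (hβ : β₁ ≤ β₂) (hu : β₂ < u) :
    ∫ z in β₁..β₂, (z : ℂ) ^ (-1 - α : ℂ) * ((z : ℂ) - Complex.I * u) ^ (α : ℂ) =
      -(1 / (α : ℂ)) *
        (((u : ℂ) / (Complex.I * β₂)) ^ (α : ℂ) *
            hyp2F1 (-α) (-α) (1 - α) (-(Complex.I * β₂) / u) -
          ((u : ℂ) / (Complex.I * β₁)) ^ (α : ℂ) *
            hyp2F1 (-α) (-α) (1 - α) (-(Complex.I * β₁) / u)) := by
  have hβ₂0 : 0 < β₂ := lt_of_lt_of_le hβ₁ hβ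
  have hu0 : 0 < u := hβ₂0.trans hu
  have hβ₁u : β₁ < u := lt_of_le_of_lt hβ hu
  set g : ℕ → ℝ → ℂ := fun n z => (-(Complex.I * u)) ^ (α : ℂ) *
      ((ascPochhammer ℂ n).eval (-(α : ℂ)) / n.factorial) *
      ((Complex.I * u)⁻¹) ^ n * (z : ℂ) ^ (-1 - (α : ℂ) + n) with hg
  have h0 : (0 : ℝ) ∉ Set.uIcc β₁ β₂ := by
    rw [Set.uIcc_of_le hβ]
    simp only [Set.mem_Icc, not_and]
    intro h; linarith
  have hrne : ∀ n : ℕ, -1 - (α : ℂ) + n ≠ -1 := fun n h =>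
    nsubA_ne_zero hα0 hα1 n (by linear_combination h)
  have hInt : ∀ n : ℕ, IntegrableOn (g n) (Set.Ioc β₁ β₂) volume := by
    intro n
    rw [← intervalIntegrable_iff_integrableOn_Ioc_of_le hβ]
    exact (intervalIntegral.intervalIntegrable_cpow (r := -1 - (α : ℂ) + n) (Or.inr h0)).const_mul _
  -- pointwise norm bound
  have hb : ∀ n : ℕ, ∀ z ∈ Set.Ioc β₁ β₂,
      ‖g n z‖ ≤ (u ^ α * β₁ ^ (-1 - α)) * (β₂ / u) ^ n := by
    intro n z hz
    have hz0 : 0 < z := lt_trans hβ₁ hz.1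
    rw [hg]
    rw [norm_term_eq hα0 hα1 hu0 hz0 n _]
    have hre : (-1 - (α : ℂ) + n).re = (-1 - α) + n := by simp
    rw [hre, Real.rpow_add hz0, Real.rpow_natCast]
    have h1 := norm_poch_div_fac_le hα0 hα1 n
    have h2 : z ^ (-1 - α) ≤ β₁ ^ (-1 - α) :=
      Real.rpow_le_rpow_of_nonpos hβ₁ hz.1.le (by linarith)
    have h3 : z ^ n ≤ β₂ ^ n := pow_le_pow_left₀ hz0.le hz.2 n
    calc u ^ α * (‖(ascPochhammer ℂ n).eval (-(α : ℂ))‖ / ↑n.factorial) * u⁻¹ ^ n *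
          (z ^ (-1 - α) * z ^ n)
        ≤ u ^ α * 1 * u⁻¹ ^ n * (β₁ ^ (-1 - α) * β₂ ^ n) := by
          have hq : (0:ℝ) ≤ ‖(ascPochhammer ℂ n).eval (-(α : ℂ))‖ / ↑n.factorial :=
            by positivity
          gcongr <;> first
          | exact Real.rpow_nonneg hz0.le _
          | exact pow_nonneg hz0.le n
          | exact (Real.rpow_pos_of_pos hβ₁ _).le
          | positivity
          | assumption
      _ = (u ^ α * β₁ ^ (-1 - α)) * (β₂ / u) ^ n := by
          rw [div_pow, div_eq_mul_inv, ← inv_pow]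
          ring
  have hNorm : Summable (fun n : ℕ => ∫ z in Set.Ioc β₁ β₂, ‖g n z‖) := by
    have hgeom : Summable (fun n : ℕ => (β₂ - β₁) * (u ^ α * β₁ ^ (-1 - α)) * (β₂ / u) ^ n) :=
      (summable_geometric_of_lt_one (r := β₂ / u) (by positivity)
        (by rwa [div_lt_one hu0])).mul_left _
    refine Summable.of_nonneg_of_le
      (fun n => integral_nonneg fun z => norm_nonneg _) (fun n => ?_) hgeom
    calc (∫ z in Set.Ioc β₁ β₂, ‖g n z‖)
        ≤ ∫ _ in Set.Ioc β₁ β₂, (u ^ α * β₁ ^ (-1 - α)) * (β₂ / u) ^ n := by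
          refine setIntegral_mono_on (hInt n).norm ?_ measurableSet_Ioc (hb n)
          exact integrableOn_const (by rw [Real.volume_Ioc]; exact
            ENNReal.ofReal_ne_top)
      _ = (β₂ - β₁) * (u ^ α * β₁ ^ (-1 - α)) * (β₂ / u) ^ n := by
          rw [setIntegral_const, Real.volume_real_Ioc_of_le hβ,
            smul_eq_mul]
          ring
  -- main computation
  rw [intervalIntegral.integral_of_le hβ]
  rw [setIntegral_congr_fun measurableSet_Ioc (fun z hz =>
    ((hasSum_g hu0 (lt_trans hβ₁ hz.1) (lt_of_le_of_lt hz.2 hu)).tsum_eq).symm :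
    Set.EqOn (fun z : ℝ => (z : ℂ) ^ (-1 - α : ℂ) * ((z : ℂ) - Complex.I * u) ^ (α : ℂ))
      (fun z : ℝ => ∑' n : ℕ, g n z) (Set.Ioc β₁ β₂))]
  rw [← integral_tsum_of_summable_integral_norm hInt hNorm]
  have hint_eval : ∀ n : ℕ, (∫ z in Set.Ioc β₁ β₂, g n z)
      = (-(Complex.I * u)) ^ (α : ℂ) *
          ((ascPochhammer ℂ n).eval (-(α : ℂ)) / n.factorial) *
          ((Complex.I * u)⁻¹) ^ n * (β₂ : ℂ) ^ ((n : ℂ) - α) / ((n : ℂ) - α)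
        - (-(Complex.I * u)) ^ (α : ℂ) *
          ((ascPochhammer ℂ n).eval (-(α : ℂ)) / n.factorial) *
          ((Complex.I * u)⁻¹) ^ n * (β₁ : ℂ) ^ ((n : ℂ) - α) / ((n : ℂ) - α) := by
    intro n
    rw [← intervalIntegral.integral_of_le hβ, hg]
    rw [intervalIntegral.integral_const_mul, integral_cpow (Or.inr ⟨hrne n, h0⟩)]
    rw [show -1 - (α : ℂ) + n + 1 = (n : ℂ) - α by ring]
    ring
  rw [tsum_congr hint_eval,
    Summable.tsum_sub (summable_h hα0 hα1 hβ₂0 hu) (summable_h hα0 hα1 hβ₁ hβ₁u),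
    tsum_h_eq hα0 hα1 hu0 hβ₂0, tsum_h_eq hα0 hα1 hu0 hβ₁]
  ring
end

section
/- For every real x with 0 ≤ x < 1, ₂F₁(−1/2, −1/2; 1/2; −x) = √(x + 1) − √x · arsinh(√x), where arsinh(y) = log(√(y² + 1) + y). -/
/-- The Gauss (ordinary) hypergeometric function `₂F₁(a, b; c; x)` of real arguments,
defined by the series `Σ_{n≥0} ((a)_n (b)_n / (c)_n) x^n / n!` (with `(a)_n` the
ascending Pochhammer symbol), absolutely convergent for `|x| < 1`. -/
noncomputable def hyp2F1Real (a b c x : ℝ) : ℝ :=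
  ∑' n : ℕ,
    (ascPochhammer ℝ n).eval a * (ascPochhammer ℝ n).eval b /
      (ascPochhammer ℝ n).eval c * x ^ n / (n.factorial : ℝ)

namespace Hyp2F1Aux

open Finset

/-- `(a)_n / n!` -/
noncomputable def pc (a : ℝ) (n : ℕ) : ℝ := (ascPochhammer ℝ n).eval a / n.factorial

lemma pc_zero (a : ℝ) : pc a 0 = 1 := by simp [pc]

lemma pc_succ (a : ℝ) (n : ℕ) : pc a (n + 1) = pc a n * (a + n) / (n + 1) := by
  rw [pc, pc, ascPochhammer_succ_eval, Nat.factorial_succ]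
  push_cast
  rw [div_mul_eq_mul_div, div_div]
  ring_nf

lemma abs_pc_le {a : ℝ} (ha : |a| ≤ 1) (n : ℕ) : |pc a n| ≤ 1 := by
  induction n with
  | zero => simp [pc_zero]
  | succ n ih =>
    rw [pc_succ, abs_div, abs_mul]
    have hn1 : |((n : ℝ) + 1)| = (n : ℝ) + 1 := abs_of_pos (by positivity)
    have h1 : |a + n| ≤ (n : ℝ) + 1 := by
      calc |a + n| ≤ |a| + |(n : ℝ)| := abs_add_le _ _
        _ ≤ 1 + n := by
            have : |(n : ℝ)| = n := abs_of_nonneg (Nat.cast_nonneg n)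
            linarith
        _ = (n : ℝ) + 1 := by ring
    rw [hn1, div_le_one (by positivity)]
    calc |pc a n| * |a + n| ≤ 1 * ((n : ℝ) + 1) :=
          mul_le_mul ih h1 (abs_nonneg _) zero_le_one
      _ = (n : ℝ) + 1 := one_mul _

lemma summable_norm_pc {a u : ℝ} (ha : |a| ≤ 1) (hu : |u| < 1) :
    Summable fun n => ‖pc a n * u ^ n‖ := by
  refine Summable.of_nonneg_of_le (fun n => norm_nonneg _) (fun n => ?_)
    (summable_geometric_of_lt_one (abs_nonneg u) hu)
  rw [Real.norm_eq_abs, abs_mul, abs_pow]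
  calc |pc a n| * |u| ^ n ≤ 1 * |u| ^ n :=
        mul_le_mul_of_nonneg_right (abs_pc_le ha n) (by positivity)
    _ = |u| ^ n := one_mul _

lemma summable_pc {a u : ℝ} (ha : |a| ≤ 1) (hu : |u| < 1) :
    Summable fun n => pc a n * u ^ n :=
  (summable_norm_pc ha hu).of_norm

lemma habs_half : |(1/2 : ℝ)| ≤ 1 := abs_le.2 ⟨by norm_num, by norm_num⟩

lemma habs_neg_half : |(-(1/2) : ℝ)| ≤ 1 := abs_le.2 ⟨by norm_num, by norm_num⟩

/-- Chu–Vandermonde in Pochhammer form. -/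
lemma chu (a b : ℝ) : ∀ n : ℕ, ∑ k ∈ range (n + 1),
    (n.choose k : ℝ) * (ascPochhammer ℝ k).eval a * (ascPochhammer ℝ (n - k)).eval b
    = (ascPochhammer ℝ n).eval (a + b) := by
  intro n
  induction n with
  | zero => simp
  | succ n ih =>
    have step1 : ∑ k ∈ range (n + 1 + 1),
        ((n + 1).choose k : ℝ) * (ascPochhammer ℝ k).eval a *
          (ascPochhammer ℝ (n + 1 - k)).eval b
        = (∑ i ∈ range (n + 1), ((n + 1).choose (i + 1) : ℝ) *
            (ascPochhammer ℝ (i + 1)).eval a * (ascPochhammer ℝ (n - i)).eval b)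
          + (ascPochhammer ℝ (n + 1)).eval b := by
      rw [Finset.sum_range_succ' (fun k => ((n + 1).choose k : ℝ) *
        (ascPochhammer ℝ k).eval a * (ascPochhammer ℝ (n + 1 - k)).eval b) (n + 1)]
      simp [Nat.succ_sub_succ]
    have step2 : ∑ i ∈ range (n + 1), (n.choose i : ℝ) * (ascPochhammer ℝ i).eval a *
          (ascPochhammer ℝ (n + 1 - i)).eval b
        = (∑ i ∈ range (n + 1), (n.choose (i + 1) : ℝ) *
            (ascPochhammer ℝ (i + 1)).eval a * (ascPochhammer ℝ (n - i)).eval b)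
          + (ascPochhammer ℝ (n + 1)).eval b := by
      rw [Finset.sum_range_succ' (fun i => (n.choose i : ℝ) * (ascPochhammer ℝ i).eval a *
        (ascPochhammer ℝ (n + 1 - i)).eval b) n]
      rw [Finset.sum_range_succ (fun i => (n.choose (i + 1) : ℝ) *
        (ascPochhammer ℝ (i + 1)).eval a * (ascPochhammer ℝ (n - i)).eval b) n]
      simp [Nat.succ_sub_succ, Nat.choose_succ_self]
    have split : ∀ i ∈ range (n + 1),
        ((n + 1).choose (i + 1) : ℝ) * (ascPochhammer ℝ (i + 1)).eval a *
          (ascPochhammer ℝ (n - i)).eval b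
        = (n.choose i : ℝ) * (ascPochhammer ℝ (i + 1)).eval a *
            (ascPochhammer ℝ (n - i)).eval b
          + (n.choose (i + 1) : ℝ) * (ascPochhammer ℝ (i + 1)).eval a *
            (ascPochhammer ℝ (n - i)).eval b := by
      intro i _
      rw [Nat.choose_succ_succ]
      push_cast
      ring
    have step3 : ∀ i ∈ range (n + 1),
        (n.choose i : ℝ) * (ascPochhammer ℝ (i + 1)).eval a *
            (ascPochhammer ℝ (n - i)).eval b
          + (n.choose i : ℝ) * (ascPochhammer ℝ i).eval a *
            (ascPochhammer ℝ (n + 1 - i)).eval b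
        = ((n.choose i : ℝ) * (ascPochhammer ℝ i).eval a *
            (ascPochhammer ℝ (n - i)).eval b) * (a + b + n) := by
      intro i hi
      rw [mem_range] at hi
      have hi' : i ≤ n := Nat.lt_succ_iff.mp hi
      have h1 : n + 1 - i = (n - i) + 1 := by omega
      rw [h1, ascPochhammer_succ_eval, ascPochhammer_succ_eval, Nat.cast_sub hi']
      ring
    calc ∑ k ∈ range (n + 1 + 1), ((n + 1).choose k : ℝ) * (ascPochhammer ℝ k).eval a *
          (ascPochhammer ℝ (n + 1 - k)).eval b
        = (∑ i ∈ range (n + 1), ((n + 1).choose (i + 1) : ℝ) *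
            (ascPochhammer ℝ (i + 1)).eval a * (ascPochhammer ℝ (n - i)).eval b)
          + (ascPochhammer ℝ (n + 1)).eval b := step1
      _ = (∑ i ∈ range (n + 1),
            ((n.choose i : ℝ) * (ascPochhammer ℝ (i + 1)).eval a *
                (ascPochhammer ℝ (n - i)).eval b
              + (n.choose (i + 1) : ℝ) * (ascPochhammer ℝ (i + 1)).eval a *
                (ascPochhammer ℝ (n - i)).eval b))
          + (ascPochhammer ℝ (n + 1)).eval b := by
            rw [Finset.sum_congr rfl split]
      _ = (∑ i ∈ range (n + 1), (n.choose i : ℝ) * (ascPochhammer ℝ (i + 1)).eval a *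
            (ascPochhammer ℝ (n - i)).eval b)
          + ((∑ i ∈ range (n + 1), (n.choose (i + 1) : ℝ) *
              (ascPochhammer ℝ (i + 1)).eval a * (ascPochhammer ℝ (n - i)).eval b)
            + (ascPochhammer ℝ (n + 1)).eval b) := by
            rw [Finset.sum_add_distrib, add_assoc]
      _ = (∑ i ∈ range (n + 1), (n.choose i : ℝ) * (ascPochhammer ℝ (i + 1)).eval a *
            (ascPochhammer ℝ (n - i)).eval b)
          + ∑ i ∈ range (n + 1), (n.choose i : ℝ) * (ascPochhammer ℝ i).eval a *
              (ascPochhammer ℝ (n + 1 - i)).eval b := by rw [← step2]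
      _ = ∑ i ∈ range (n + 1),
            ((n.choose i : ℝ) * (ascPochhammer ℝ (i + 1)).eval a *
                (ascPochhammer ℝ (n - i)).eval b
              + (n.choose i : ℝ) * (ascPochhammer ℝ i).eval a *
                (ascPochhammer ℝ (n + 1 - i)).eval b) := by
            rw [Finset.sum_add_distrib]
      _ = ∑ i ∈ range (n + 1), ((n.choose i : ℝ) * (ascPochhammer ℝ i).eval a *
            (ascPochhammer ℝ (n - i)).eval b) * (a + b + n) := by
            rw [Finset.sum_congr rfl step3]
      _ = (∑ i ∈ range (n + 1), (n.choose i : ℝ) * (ascPochhammer ℝ i).eval a *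
            (ascPochhammer ℝ (n - i)).eval b) * (a + b + n) := by
            rw [Finset.sum_mul]
      _ = (ascPochhammer ℝ n).eval (a + b) * (a + b + n) := by rw [ih]
      _ = (ascPochhammer ℝ (n + 1)).eval (a + b) := by
            rw [ascPochhammer_succ_eval]

/-- Cauchy product of two binomial-type series. -/
lemma tsum_pc_mul {a b u : ℝ} (ha : |a| ≤ 1) (hb : |b| ≤ 1) (hu : |u| < 1) :
    (∑' n, pc a n * u ^ n) * (∑' n, pc b n * u ^ n) = ∑' n, pc (a + b) n * u ^ n := by
  rw [tsum_mul_tsum_eq_tsum_sum_antidiagonal_of_summable_norm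
    (summable_norm_pc ha hu) (summable_norm_pc hb hu)]
  apply tsum_congr
  intro n
  rw [Finset.Nat.sum_antidiagonal_eq_sum_range_succ
    (fun k l => (pc a k * u ^ k) * (pc b l * u ^ l))]
  have key : ∀ k ∈ range (n + 1), (pc a k * u ^ k) * (pc b (n - k) * u ^ (n - k))
      = ((n.choose k : ℝ) * (ascPochhammer ℝ k).eval a *
          (ascPochhammer ℝ (n - k)).eval b) / n.factorial * u ^ n := by
    intro k hk
    rw [mem_range] at hk
    have hk' : k ≤ n := Nat.lt_succ_iff.mp hk
    have hpow : u ^ k * u ^ (n - k) = u ^ n := by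
      rw [← pow_add]
      congr 1
      omega
    have hfact : ((n.choose k : ℝ) * k.factorial * (n - k).factorial) = n.factorial := by
      exact_mod_cast congrArg (Nat.cast (R := ℝ)) (Nat.choose_mul_factorial_mul_factorial hk')
    have hnf : (n.factorial : ℝ) ≠ 0 := Nat.cast_ne_zero.2 n.factorial_ne_zero
    have hkf : (0:ℝ) < k.factorial := by exact_mod_cast k.factorial_pos
    have hnkf : (0:ℝ) < (n - k).factorial := by exact_mod_cast (n - k).factorial_pos
    rw [pc, pc]
    rw [show (ascPochhammer ℝ k).eval a / k.factorial * u ^ k *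
        ((ascPochhammer ℝ (n - k)).eval b / (n - k).factorial * u ^ (n - k))
        = ((ascPochhammer ℝ k).eval a * (ascPochhammer ℝ (n - k)).eval b) /
            ((k.factorial : ℝ) * (n - k).factorial) * (u ^ k * u ^ (n - k)) by ring]
    rw [hpow]
    congr 1
    rw [div_eq_div_iff (by positivity) hnf, ← hfact]
    ring
  rw [Finset.sum_congr rfl key, ← Finset.sum_mul, ← Finset.sum_div, chu, pc]

lemma tsum_pc_zero (u : ℝ) : ∑' n, pc 0 n * u ^ n = 1 := by
  rw [tsum_eq_single 0]
  · simp [pc_zero]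
  · intro n hn
    obtain ⟨m, rfl⟩ := Nat.exists_eq_succ_of_ne_zero hn
    simp [pc, ascPochhammer_eval_zero]

lemma pc_neg_one_eq_zero : ∀ n : ℕ, pc (-1) (n + 2) = 0 := by
  intro n
  induction n with
  | zero =>
    rw [pc_succ]
    norm_num
  | succ n ih =>
    rw [pc_succ, ih]
    ring

lemma pc_one_one : pc (-1) 1 = -1 := by
  rw [show (1 : ℕ) = 0 + 1 from rfl, pc_succ, pc_zero]
  norm_num

lemma tsum_pc_neg_one (u : ℝ) : ∑' n, pc (-1) n * u ^ n = 1 - u := by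
  rw [tsum_eq_sum (s := range 2)]
  · rw [Finset.sum_range_succ, Finset.sum_range_one, pc_zero, pc_one_one]
    ring
  · intro n hn
    rw [mem_range] at hn
    obtain ⟨m, rfl⟩ : ∃ m, n = m + 2 := ⟨n - 2, by omega⟩
    rw [pc_neg_one_eq_zero]
    ring

lemma pc_half_pos (n : ℕ) : 0 < pc (1/2) n := by
  apply div_pos (ascPochhammer_pos n _ (by norm_num))
  exact_mod_cast n.factorial_pos

lemma pc_succ_le_pc_half (n : ℕ) : pc (1/2) (n + 1) ≤ pc (1/2) n := by
  rw [pc_succ, div_le_iff₀ (by positivity : (0:ℝ) < (n:ℝ) + 1)]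
  nlinarith [pc_half_pos n]

/-- Positivity of `∑ (1/2)_n u^n / n!` for `u ∈ (-1, 0]`. -/
lemma tsum_pc_half_pos {u : ℝ} (hu0 : -1 < u) (hu1 : u ≤ 0) :
    0 < ∑' n, pc (1/2) n * u ^ n := by
  have hu : |u| < 1 := abs_lt.2 ⟨hu0, lt_of_le_of_lt hu1 one_pos⟩
  have ha := habs_half
  have hf : Summable fun n => pc (1/2) n * u ^ n := summable_pc ha hu
  have hu2 : u ^ 2 < 1 := by nlinarith [sq_abs u, abs_nonneg u]
  have hgeo : Summable fun k : ℕ => (u ^ 2) ^ k :=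
    summable_geometric_of_lt_one (sq_nonneg u) hu2
  have hbound : ∀ k : ℕ, |u| ^ (2 * k) = (u ^ 2) ^ k := by
    intro k
    rw [pow_mul, sq_abs]
  have he : Summable fun k => pc (1/2) (2 * k) * u ^ (2 * k) := by
    apply Summable.of_norm_bounded hgeo
    intro k
    rw [Real.norm_eq_abs, abs_mul, abs_pow, ← hbound k]
    calc |pc (1/2) (2 * k)| * |u| ^ (2 * k) ≤ 1 * |u| ^ (2 * k) :=
          mul_le_mul_of_nonneg_right (abs_pc_le habs_half _) (by positivity)
      _ = |u| ^ (2 * k) := one_mul _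
  have ho : Summable fun k => pc (1/2) (2 * k + 1) * u ^ (2 * k + 1) := by
    apply Summable.of_norm_bounded hgeo
    intro k
    rw [Real.norm_eq_abs, abs_mul, abs_pow, ← hbound k]
    have habsu : |u| ≤ 1 := hu.le
    calc |pc (1/2) (2 * k + 1)| * |u| ^ (2 * k + 1)
        ≤ 1 * |u| ^ (2 * k + 1) :=
          mul_le_mul_of_nonneg_right (abs_pc_le habs_half _) (by positivity)
      _ = |u| ^ (2 * k) * |u| := by ring
      _ ≤ |u| ^ (2 * k) * 1 := mul_le_mul_of_nonneg_left habsu (by positivity)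
      _ = |u| ^ (2 * k) := mul_one _
  have hpair : ∑' n, pc (1/2) n * u ^ n
      = ∑' k, (pc (1/2) (2 * k) * u ^ (2 * k) + pc (1/2) (2 * k + 1) * u ^ (2 * k + 1)) :=
    (tsum_even_add_odd (f := fun n => pc (1/2) n * u ^ n) he ho).symm.trans (Summable.tsum_add he ho).symm
  rw [hpair]
  have hnonneg : ∀ k, 0 ≤ pc (1/2) (2 * k) * u ^ (2 * k)
      + pc (1/2) (2 * k + 1) * u ^ (2 * k + 1) := by
    intro k
    have h1 : (0 : ℝ) ≤ u ^ (2 * k) := by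
      rw [pow_mul]
      positivity
    have h2 : u ^ (2 * k + 1) = u ^ (2 * k) * u := by ring
    have h4 := pc_succ_le_pc_half (2 * k)
    have h5 := pc_half_pos (2 * k)
    have h6 := pc_half_pos (2 * k + 1)
    rw [h2]
    nlinarith [mul_nonneg (mul_nonneg h6.le h1) (by linarith : (0:ℝ) ≤ u + 1),
      mul_nonneg (sub_nonneg.2 h4) h1]
  apply Summable.tsum_pos (he.add ho) hnonneg 0
  have hp1 : pc (1/2) 1 = 1/2 := by
    rw [show pc (1/2) 1 = pc (1/2) (0 + 1) from rfl, pc_succ, pc_zero]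
    norm_num
  simp only [mul_zero, pow_zero, mul_one, zero_add, pow_one, hp1, pc_zero]
  nlinarith

lemma tsum_pc_neg_half_mul_half {u : ℝ} (hu : |u| < 1) :
    (∑' n, pc (-(1/2)) n * u ^ n) * (∑' n, pc (1/2) n * u ^ n) = 1 := by
  rw [tsum_pc_mul habs_neg_half habs_half hu,
    show -(1/2 : ℝ) + 1/2 = 0 by ring, tsum_pc_zero]

lemma tsum_pc_neg_half_pos {u : ℝ} (hu0 : -1 < u) (hu1 : u ≤ 0) :
    0 < ∑' n, pc (-(1/2)) n * u ^ n := by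
  have hu : |u| < 1 := abs_lt.2 ⟨hu0, lt_of_le_of_lt hu1 one_pos⟩
  have h1 := tsum_pc_neg_half_mul_half hu
  nlinarith [tsum_pc_half_pos hu0 hu1]

/-- `∑ (-1/2)_n (-x)^n / n! = √(1+x)` for `0 ≤ x < 1`. -/
lemma hasSum_neg_half (x : ℝ) (hx0 : 0 ≤ x) (hx1 : x < 1) :
    HasSum (fun n => pc (-(1/2)) n * (-x) ^ n) (Real.sqrt (1 + x)) := by
  have hu : |(-x)| < 1 := by rw [abs_neg, abs_of_nonneg hx0]; exact hx1
  have hS := summable_pc (a := -(1/2)) habs_neg_half hu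
  have hsq : (∑' n, pc (-(1/2)) n * (-x) ^ n) ^ 2 = 1 + x := by
    rw [sq, tsum_pc_mul habs_neg_half habs_neg_half hu,
      show -(1/2 : ℝ) + -(1/2) = -1 by ring, tsum_pc_neg_one]
    ring
  have hpos : 0 < ∑' n, pc (-(1/2)) n * (-x) ^ n :=
    tsum_pc_neg_half_pos (by linarith) (by linarith)
  have heq : Real.sqrt (1 + x) = ∑' n, pc (-(1/2)) n * (-x) ^ n := by
    rw [← hsq, Real.sqrt_sq hpos.le]
  rw [heq]
  exact hS.hasSum

/-- `∑ (1/2)_n (-v)^n / n! = 1/√(1+v)` for `0 ≤ v < 1`. -/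
lemma tsum_half_eq (v : ℝ) (hv0 : 0 ≤ v) (hv1 : v < 1) :
    ∑' n, pc (1/2) n * (-v) ^ n = (Real.sqrt (1 + v))⁻¹ := by
  have hu : |(-v)| < 1 := by rw [abs_neg, abs_of_nonneg hv0]; exact hv1
  have hsq : (∑' n, pc (1/2) n * (-v) ^ n) ^ 2 = (1 + v)⁻¹ := by
    rw [sq, tsum_pc_mul habs_half habs_half hu,
      show (1/2 : ℝ) + 1/2 = 1 by ring]
    have hone : ∀ n : ℕ, pc 1 n * (-v) ^ n = (-v) ^ n := by
      intro n
      rw [pc, ascPochhammer_eval_one]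
      field_simp
    rw [tsum_congr hone, (hasSum_geometric_of_abs_lt_one hu).tsum_eq, sub_neg_eq_add]
  have hpos : 0 < ∑' n, pc (1/2) n * (-v) ^ n :=
    tsum_pc_half_pos (by linarith) (by linarith)
  have heq : (∑' n, pc (1/2) n * (-v) ^ n) = Real.sqrt ((1 + v)⁻¹) := by
    rw [← hsq, Real.sqrt_sq hpos.le]
  rw [heq, Real.sqrt_inv]

/-! ### The integral-side series -/

/-- The correction terms `e_n`. -/
noncomputable def en (x : ℝ) : ℕ → ℝ
  | 0 => 0
  | (n + 1) => x * pc (1/2) n * (-x) ^ n / (2 * n + 1)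

/-- The integrand functions. -/
noncomputable def gg (x : ℝ) : ℕ → ℝ → ℝ
  | 0, _ => 0
  | (n + 1), t => x * pc (1/2) n * (-x) ^ n * t ^ (2 * n)

lemma continuous_gg (x : ℝ) (n : ℕ) : Continuous (gg x n) := by
  cases n with
  | zero => exact continuous_const
  | succ n => exact continuous_const.mul (continuous_pow (2 * n))

lemma en_eq_integral (x : ℝ) (n : ℕ) : en x n = ∫ t in (0:ℝ)..1, gg x n t := by
  cases n with
  | zero => simp [en, gg]
  | succ n =>
    rw [show gg x (n + 1) = fun t => x * pc (1/2) n * (-x) ^ n * t ^ (2 * n) from rfl]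
    rw [intervalIntegral.integral_const_mul, integral_pow]
    rw [en]
    push_cast
    ring

/-- Pointwise value of the sum of the integrands. -/
lemma tsum_gg (x : ℝ) (hx0 : 0 ≤ x) (hx1 : x < 1) (t : ℝ) (ht0 : 0 ≤ t) (ht1 : t ≤ 1) :
    ∑' n, gg x n t = x / Real.sqrt (1 + x * t ^ 2) := by
  have hv0 : 0 ≤ x * t ^ 2 := by positivity
  have ht2 : t ^ 2 ≤ 1 := pow_le_one₀ ht0 ht1
  have hv1 : x * t ^ 2 < 1 := by nlinarith
  have hu : |(-(x * t ^ 2))| < 1 := by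
    rw [abs_neg, abs_of_nonneg hv0]; exact hv1
  have hgs : ∀ n : ℕ, gg x (n + 1) t = x * (pc (1/2) n * (-(x * t ^ 2)) ^ n) := by
    intro n
    show x * pc (1/2) n * (-x) ^ n * t ^ (2 * n) = _
    rw [show (-(x * t ^ 2)) ^ n = (-x) ^ n * (t ^ 2) ^ n by rw [← mul_pow]; ring_nf,
      pow_mul]
    ring
  have hsummable : Summable fun n => gg x n t := by
    rw [← summable_nat_add_iff 1]
    have hfun : (fun n => gg x (n + 1) t)
        = fun n => x * (pc (1/2) n * (-(x * t ^ 2)) ^ n) := funext hgs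
    rw [hfun]
    exact (summable_pc habs_half hu).mul_left x
  rw [Summable.tsum_eq_zero_add hsummable, show gg x 0 t = 0 from rfl, zero_add,
    tsum_congr hgs, tsum_mul_left, tsum_half_eq _ hv0 hv1, div_eq_mul_inv]

lemma integral_arsinh (x : ℝ) (hx0 : 0 ≤ x) :
    ∫ t in (0:ℝ)..1, x / Real.sqrt (1 + x * t ^ 2)
      = Real.sqrt x * Real.arsinh (Real.sqrt x) := by
  have hcont : Continuous fun t : ℝ => x / Real.sqrt (1 + x * t ^ 2) := by
    apply Continuous.div continuous_const
    · exact (continuous_const.add (continuous_const.mul (continuous_pow 2))).sqrt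
    · intro t
      apply ne_of_gt
      apply Real.sqrt_pos.2
      nlinarith [sq_nonneg t, mul_nonneg hx0 (sq_nonneg t)]
  have hderiv : ∀ t ∈ Set.uIcc (0:ℝ) 1,
      HasDerivAt (fun t => Real.sqrt x * Real.arsinh (Real.sqrt x * t))
        (x / Real.sqrt (1 + x * t ^ 2)) t := by
    intro t _
    have h1 : HasDerivAt (fun t : ℝ => Real.sqrt x * t) (Real.sqrt x) t := by
      simpa using (hasDerivAt_id t).const_mul (Real.sqrt x)
    have h2 := (Real.hasDerivAt_arsinh (Real.sqrt x * t)).comp t h1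
    have h3 := h2.const_mul (Real.sqrt x)
    have hx2 : (Real.sqrt x * t) ^ 2 = x * t ^ 2 := by
      rw [mul_pow, Real.sq_sqrt hx0]
    rw [hx2] at h3
    refine h3.congr_deriv (Eq.symm ?_)
    rw [div_eq_mul_inv]
    calc x * (Real.sqrt (1 + x * t ^ 2))⁻¹
        = (Real.sqrt x * Real.sqrt x) * (Real.sqrt (1 + x * t ^ 2))⁻¹ := by
          rw [Real.mul_self_sqrt hx0]
      _ = Real.sqrt x * ((Real.sqrt (1 + x * t ^ 2))⁻¹ * Real.sqrt x) := by ring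
  rw [intervalIntegral.integral_eq_sub_of_hasDerivAt hderiv (hcont.intervalIntegrable 0 1)]
  simp [Real.arsinh_zero]

/-- `HasSum e_n (√x arsinh √x)`. -/
lemma hasSum_en (x : ℝ) (hx0 : 0 ≤ x) (hx1 : x < 1) :
    HasSum (en x) (Real.sqrt x * Real.arsinh (Real.sqrt x)) := by
  set μ := MeasureTheory.volume.restrict (Set.Ioc (0:ℝ) 1) with hμ
  have hint : ∀ n : ℕ, MeasureTheory.Integrable (gg x n) μ :=
    fun n => (continuous_gg x n).integrableOn_Ioc
  have hbound : ∀ n : ℕ, (∫ t, ‖gg x n t‖ ∂μ) ≤ x ^ n := by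
    intro n
    have hnorm : ∫ t, ‖gg x n t‖ ∂μ = ‖∫ t, ‖gg x n t‖ ∂μ‖ :=
      (Real.norm_of_nonneg (MeasureTheory.integral_nonneg fun t => norm_nonneg _)).symm
    rw [hnorm]
    calc ‖∫ t, ‖gg x n t‖ ∂μ‖
        ≤ x ^ n * (μ Set.univ).toReal := by
          apply MeasureTheory.norm_integral_le_of_norm_le_const
          rw [hμ, MeasureTheory.ae_restrict_iff' measurableSet_Ioc]
          filter_upwards with t ht
          rw [Real.norm_of_nonneg (norm_nonneg _), Real.norm_eq_abs]
          cases n with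
          | zero => simp [gg]
          | succ n =>
            have ht0 : 0 ≤ t := ht.1.le
            have ht1 : t ≤ 1 := ht.2
            show |x * pc (1/2) n * (-x) ^ n * t ^ (2 * n)| ≤ x ^ (n + 1)
            rw [abs_mul, abs_mul, abs_mul, abs_pow, abs_pow, abs_neg,
              abs_of_nonneg hx0, abs_of_nonneg ht0]
            have h1 : |pc (1/2) n| ≤ 1 := abs_pc_le habs_half n
            have h2 : t ^ (2 * n) ≤ 1 := pow_le_one₀ ht0 ht1
            have h3 : (0:ℝ) ≤ x ^ n := by positivity
            have h5 : x * |pc (1/2) n| ≤ x * 1 := mul_le_mul_of_nonneg_left h1 hx0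
            have h6 : (0:ℝ) ≤ x * |pc (1/2) n| * x ^ n := by positivity
            calc x * |pc (1/2) n| * x ^ n * t ^ (2 * n)
                ≤ x * |pc (1/2) n| * x ^ n * 1 :=
                  mul_le_mul_of_nonneg_left h2 h6
              _ ≤ x * 1 * x ^ n * 1 := by nlinarith
              _ = x ^ (n + 1) := by ring
      _ ≤ x ^ n * 1 := by
          apply mul_le_mul_of_nonneg_left _ (by positivity)
          rw [hμ, MeasureTheory.Measure.restrict_apply MeasurableSet.univ, Set.univ_inter,
            Real.volume_Ioc]
          norm_num
      _ = x ^ n := mul_one _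
  have hsummable_int : Summable fun n => ∫ t, ‖gg x n t‖ ∂μ :=
    Summable.of_nonneg_of_le
      (fun n => MeasureTheory.integral_nonneg fun t => norm_nonneg _) hbound
      (summable_geometric_of_lt_one hx0 hx1)
  have hswap := MeasureTheory.hasSum_integral_of_summable_integral_norm hint hsummable_int
  have hcongr : ∫ t, (∑' n, gg x n t) ∂μ = ∫ t, x / Real.sqrt (1 + x * t ^ 2) ∂μ := by
    rw [hμ]
    apply MeasureTheory.setIntegral_congr_fun measurableSet_Ioc
    intro t ht
    exact tsum_gg x hx0 hx1 t ht.1.le ht.2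
  have hint2 : ∫ t, x / Real.sqrt (1 + x * t ^ 2) ∂μ
      = Real.sqrt x * Real.arsinh (Real.sqrt x) := by
    rw [hμ, ← intervalIntegral.integral_of_le zero_le_one, integral_arsinh x hx0]
  have hen : en x = fun n => ∫ t, gg x n t ∂μ := by
    funext n
    rw [en_eq_integral, hμ, intervalIntegral.integral_of_le zero_le_one]
  rw [hen, ← hint2, ← hcongr]
  exact hswap

lemma ascPochhammer_succ_eval_left (a : ℝ) (n : ℕ) :
    (ascPochhammer ℝ (n + 1)).eval a = a * (ascPochhammer ℝ n).eval (a + 1) := by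
  rw [ascPochhammer_succ_left, Polynomial.eval_mul, Polynomial.eval_X, Polynomial.eval_comp,
    Polynomial.eval_add, Polynomial.eval_X, Polynomial.eval_one]

/-- The per-term identity. -/
lemma term_eq (x : ℝ) (n : ℕ) :
    (ascPochhammer ℝ n).eval (-(1/2)) * (ascPochhammer ℝ n).eval (-(1/2)) /
        (ascPochhammer ℝ n).eval (1/2) * (-x) ^ n / (n.factorial : ℝ)
      = pc (-(1/2)) n * (-x) ^ n - en x n := by
  cases n with
  | zero => simp [pc_zero, en]
  | succ n =>
    have hQ : (0:ℝ) < (ascPochhammer ℝ n).eval (1/2) := ascPochhammer_pos n _ (by norm_num)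
    have hfac : ((n.factorial : ℝ)) ≠ 0 := Nat.cast_ne_zero.2 n.factorial_ne_zero
    have hn1 : ((n:ℝ) + 1) ≠ 0 := by positivity
    have h2n1 : (2 * (n:ℝ) + 1) ≠ 0 := by positivity
    have hhalf : ((1:ℝ)/2 + n) ≠ 0 := by positivity
    have hA : (ascPochhammer ℝ (n + 1)).eval (-(1/2))
        = -(1/2) * (ascPochhammer ℝ n).eval (1/2) := by
      rw [ascPochhammer_succ_eval_left, show (-(1/2) : ℝ) + 1 = 1/2 by norm_num]
    have hB : (ascPochhammer ℝ (n + 1)).eval (1/2)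
        = (ascPochhammer ℝ n).eval (1/2) * (1/2 + n) := ascPochhammer_succ_eval _ _
    rw [en]
    simp only [pc]
    rw [hA, hB, Nat.factorial_succ, pow_succ]
    push_cast
    field_simp
    ring

/-! The per-term identity matching the curried form in `hyp2F1Real`. -/

end Hyp2F1Aux

/-- For every real `x` with `0 ≤ x < 1`,
`₂F₁(−1/2, −1/2; 1/2; −x) = √(x + 1) − √x · arsinh(√x)`,
where `arsinh(y) = log(√(y² + 1) + y)`. -/
theorem hyp2F1_half_elementary (x : ℝ) (hx0 : 0 ≤ x) (hx1 : x < 1) :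
    hyp2F1Real (-(1 / 2)) (-(1 / 2)) (1 / 2) (-x) =
      Real.sqrt (x + 1) - Real.sqrt x * Real.arsinh (Real.sqrt x) := by
  have hd := Hyp2F1Aux.hasSum_neg_half x hx0 hx1
  have he := Hyp2F1Aux.hasSum_en x hx0 hx1
  have h := hd.sub he
  unfold hyp2F1Real
  calc (∑' n : ℕ, (ascPochhammer ℝ n).eval (-(1/2)) * (ascPochhammer ℝ n).eval (-(1/2)) /
          (ascPochhammer ℝ n).eval (1/2) * (-x) ^ n / (n.factorial : ℝ))
      = ∑' n : ℕ, (Hyp2F1Aux.pc (-(1/2)) n * (-x) ^ n - Hyp2F1Aux.en x n) :=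
        tsum_congr (Hyp2F1Aux.term_eq x)
    _ = Real.sqrt (1 + x) - Real.sqrt x * Real.arsinh (Real.sqrt x) := h.tsum_eq
    _ = Real.sqrt (x + 1) - Real.sqrt x * Real.arsinh (Real.sqrt x) := by rw [add_comm]
end
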